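/- arXiv:0707.4129 — 7 statements merged into one kernel-verified Lean document; each statement's English description precedes it below -/
import Mathlib

section
/- Let l ≥ 2 be even and let h_1,…,h_l be complex numbers satisfying, for every i ∈ {1,…,l}, the equation h_i·( −Σ_{j=1}^{i−1} j·h_j + ((l−2i+1)/2)·h_i + Σ_{j=i+1}^{l} (l−j+1)·h_j + (l+1)²/4 − i(l+1)/2 ) = 0. Then for any indices i < j with h_i ≠ 0 and h_j ≠ 0, one has h_i + 2h_{i+1} + 2h_{i+2} + ⋯ + 2h_{j−1} + h_j + (j−i) = 0. -/
lemma sum_Icc_split (f : ℕ → ℂ) {a b c : ℕ} (h0 : 1 ≤ a) (h1 : a ≤ b) (h2 : b ≤ c) :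
    ∑ m ∈ Finset.Icc a c, f m
      = (∑ m ∈ Finset.Icc a (b - 1), f m) + f b + ∑ m ∈ Finset.Icc (b + 1) c, f m := by
  obtain ⟨a, rfl⟩ : ∃ a', a = a' + 1 := ⟨a - 1, (Nat.succ_pred_eq_of_pos h0).symm⟩
  obtain ⟨b, rfl⟩ : ∃ b', b = b' + 1 := ⟨b - 1, (Nat.succ_pred_eq_of_pos (h0.trans h1)).symm⟩
  have hab : a ≤ b := Nat.succ_le_succ_iff.mp h1
  simp only [Nat.add_sub_cancel, Finset.Icc_add_one_left_eq_Ioc]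
  rw [← Finset.sum_Ioc_consecutive f ((hab.trans (Nat.le_succ b))) h2,
    Finset.sum_Ioc_succ_top hab]

/-- Let `l ≥ 2` be even and `h 1, …, h l` complex numbers satisfying, for
every `i ∈ {1,…,l}`,
`h i * (−Σ_{j=1}^{i−1} j·h j + ((l−2i+1)/2)·h i + Σ_{j=i+1}^{l} (l−j+1)·h j + (l+1)²/4 − i(l+1)/2) = 0`.
Then for any `i < j` with `h i ≠ 0` and `h j ≠ 0` one has
`h i + 2·h (i+1) + ⋯ + 2·h (j−1) + h j + (j − i) = 0`. -/
theorem pairwise_relation_of_system (l : ℕ) (hl2 : 2 ≤ l) (hleven : Even l) (h : ℕ → ℂ)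
    (hsys : ∀ i ∈ Finset.Icc 1 l,
      h i * (-(∑ j ∈ Finset.Icc 1 (i - 1), (j : ℂ) * h j)
        + ((l : ℂ) - 2 * i + 1) / 2 * h i
        + (∑ j ∈ Finset.Icc (i + 1) l, ((l : ℂ) - j + 1) * h j)
        + ((l : ℂ) + 1) ^ 2 / 4 - (i : ℂ) * ((l : ℂ) + 1) / 2) = 0) :
    ∀ i ∈ Finset.Icc 1 l, ∀ j ∈ Finset.Icc 1 l, i < j → h i ≠ 0 → h j ≠ 0 →
      h i + 2 * (∑ m ∈ Finset.Icc (i + 1) (j - 1), h m) + h j + ((j : ℂ) - i) = 0 := by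
  intro i hi j hj hij hi0 hj0
  obtain ⟨hi1, hil⟩ := Finset.mem_Icc.mp hi
  obtain ⟨hj1, hjl⟩ := Finset.mem_Icc.mp hj
  have Fi : -(∑ m ∈ Finset.Icc 1 (i - 1), (m : ℂ) * h m)
        + ((l : ℂ) - 2 * i + 1) / 2 * h i
        + (∑ m ∈ Finset.Icc (i + 1) l, ((l : ℂ) - m + 1) * h m)
        + ((l : ℂ) + 1) ^ 2 / 4 - (i : ℂ) * ((l : ℂ) + 1) / 2 = 0 :=
    (mul_eq_zero.mp (hsys i hi)).resolve_left hi0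
  have Fj : -(∑ m ∈ Finset.Icc 1 (j - 1), (m : ℂ) * h m)
        + ((l : ℂ) - 2 * j + 1) / 2 * h j
        + (∑ m ∈ Finset.Icc (j + 1) l, ((l : ℂ) - m + 1) * h m)
        + ((l : ℂ) + 1) ^ 2 / 4 - (j : ℂ) * ((l : ℂ) + 1) / 2 = 0 :=
    (mul_eq_zero.mp (hsys j hj)).resolve_left hj0
  have hij1 : i ≤ j - 1 := Nat.le_sub_one_of_lt hij
  have e1 : ∑ m ∈ Finset.Icc 1 (j - 1), (m : ℂ) * h m
      = (∑ m ∈ Finset.Icc 1 (i - 1), (m : ℂ) * h m) + (i : ℂ) * h i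
        + ∑ m ∈ Finset.Icc (i + 1) (j - 1), (m : ℂ) * h m :=
    sum_Icc_split _ le_rfl hi1 hij1
  have e2 : ∑ m ∈ Finset.Icc (i + 1) l, ((l : ℂ) - m + 1) * h m
      = (∑ m ∈ Finset.Icc (i + 1) (j - 1), ((l : ℂ) - m + 1) * h m)
        + ((l : ℂ) - j + 1) * h j
        + ∑ m ∈ Finset.Icc (j + 1) l, ((l : ℂ) - m + 1) * h m :=
    sum_Icc_split _ (Nat.le_add_left 1 i) hij hjl
  have e3 : (∑ m ∈ Finset.Icc (i + 1) (j - 1), (m : ℂ) * h m)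
      + (∑ m ∈ Finset.Icc (i + 1) (j - 1), ((l : ℂ) - m + 1) * h m)
      = ((l : ℂ) + 1) * ∑ m ∈ Finset.Icc (i + 1) (j - 1), h m := by
    rw [← Finset.sum_add_distrib, Finset.mul_sum]
    exact Finset.sum_congr rfl fun m _ => by ring
  have key : ((l : ℂ) + 1) *
      (h i + 2 * (∑ m ∈ Finset.Icc (i + 1) (j - 1), h m) + h j + ((j : ℂ) - i)) = 0 := by
    linear_combination 2 * Fi - 2 * Fj - 2 * e1 - 2 * e2 - 2 * e3
  have hln : ((l : ℂ) + 1) ≠ 0 := Nat.cast_add_one_ne_zero l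
  exact (mul_eq_zero.mp key).resolve_left hln
end

section
/- Let l ≥ 2 be even and S = {i_1 < i_2 < ⋯ < i_k} ⊆ {1,…,l}. Define h_{i_j} = Σ_{s=j+1}^{k} (−1)^{s−j} i_s + Σ_{s=1}^{j−1} (−1)^{j−s+1} i_s + (−1)^{k−j+1}(l+1)/2 for j = 1,…,k, and h_i = 0 for i ∉ S. Then (h_1,…,h_l) satisfies, for every i ∈ {1,…,l}: h_i·( −Σ_{j=1}^{i−1} j·h_j + ((l−2i+1)/2)·h_i + Σ_{j=i+1}^{l} (l−j+1)·h_j + (l+1)²/4 − i(l+1)/2 ) = 0. -/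
/-- The value `h_{i_j}` attached (by the alternating-sum formula) to the `j`-th element
(1-based) of the subset `S = {idx 1 < idx 2 < ⋯ < idx k} ⊆ {1,…,l}`:
`h_{i_j} = Σ_{s=j+1}^{k} (−1)^{s−j} i_s + Σ_{s=1}^{j−1} (−1)^{j−s+1} i_s + (−1)^{k−j+1}(l+1)/2`. -/
noncomputable def Hval (l k : ℕ) (idx : ℕ → ℕ) (j : ℕ) : ℚ :=
  (∑ s ∈ Finset.Icc (j + 1) k, (-1 : ℚ) ^ (s - j) * (idx s : ℚ))
    + (∑ s ∈ Finset.Icc 1 (j - 1), (-1 : ℚ) ^ (j - s + 1) * (idx s : ℚ))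
    + (-1 : ℚ) ^ (k - j + 1) * ((l : ℚ) + 1) / 2

/-- The tuple `(h_1, …, h_l)`: `h n = h_{i_j}` if `n = i_j ∈ S`, and `h n = 0` if `n ∉ S`. -/
noncomputable def hfun (l k : ℕ) (idx : ℕ → ℕ) (n : ℕ) : ℚ :=
  ∑ j ∈ Finset.Icc 1 k, if idx j = n then Hval l k idx j else 0

lemma sum_Icc_bot {M : Type*} [AddCommMonoid M] (f : ℕ → M) {a b : ℕ} (h : a ≤ b) :
    ∑ s ∈ Finset.Icc a b, f s = f a + ∑ s ∈ Finset.Icc (a+1) b, f s := by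
  rw [show Finset.Icc a b = insert a (Finset.Icc (a+1) b) by ext x; simp; omega,
    Finset.sum_insert (by simp)]

noncomputable def Bval (k : ℕ) (idx : ℕ → ℕ) (t : ℕ) : ℚ :=
  (∑ s ∈ Finset.Icc (t + 1) k, (-1 : ℚ) ^ (s - t) * (idx s : ℚ))
    + (∑ s ∈ Finset.Icc 1 (t - 1), (-1 : ℚ) ^ (t - s + 1) * (idx s : ℚ))

noncomputable def Fm (l k : ℕ) (idx : ℕ → ℕ) (m : ℕ) : ℚ :=
  -(∑ t ∈ Finset.Icc 1 (m-1), (idx t : ℚ) * Hval l k idx t)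
  + ((l:ℚ) - 2 * (idx m) + 1)/2 * Hval l k idx m
  + (∑ t ∈ Finset.Icc (m+1) k, ((l:ℚ) - idx t + 1) * Hval l k idx t)
  + ((l:ℚ)+1)^2/4 - (idx m : ℚ) * ((l:ℚ)+1)/2

lemma hval_pair (l k : ℕ) (idx : ℕ → ℕ) (m : ℕ) (h1 : 1 ≤ m) (h2 : m < k) :
    Hval l k idx m + Hval l k idx (m+1) = (idx m : ℚ) - (idx (m+1) : ℚ) := by
  obtain ⟨m', rfl⟩ : ∃ m', m = m' + 1 := ⟨m - 1, by omega⟩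
  unfold Hval
  simp only [Nat.add_sub_cancel]
  rw [sum_Icc_bot (fun s => (-1:ℚ)^(s-(m'+1)) * (idx s : ℚ)) (show m'+1+1 ≤ k by omega)]
  rw [Finset.sum_Icc_succ_top (show 1 ≤ m'+1 by omega)
    (fun s => (-1:ℚ)^(m'+1+1-s+1) * (idx s : ℚ))]
  have z1 : (∑ s ∈ Finset.Icc (m'+1+1+1) k, (-1:ℚ)^(s-(m'+1)) * (idx s : ℚ))
      + (∑ s ∈ Finset.Icc (m'+1+1+1) k, (-1:ℚ)^(s-(m'+1+1)) * (idx s : ℚ)) = 0 := by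
    rw [← Finset.sum_add_distrib]
    apply Finset.sum_eq_zero
    intro s hs
    simp only [Finset.mem_Icc] at hs
    rw [show s - (m'+1) = (s - (m'+1+1)) + 1 from by omega, pow_succ]
    ring
  have z2 : (∑ s ∈ Finset.Icc 1 m', (-1:ℚ)^(m'+1-s+1) * (idx s : ℚ))
      + (∑ s ∈ Finset.Icc 1 m', (-1:ℚ)^(m'+1+1-s+1) * (idx s : ℚ)) = 0 := by
    rw [← Finset.sum_add_distrib]
    apply Finset.sum_eq_zero
    intro s hs
    simp only [Finset.mem_Icc] at hs
    rw [show m'+1+1-s+1 = (m'+1-s+1) + 1 from by omega, pow_succ]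
    ring
  have z3 : (-1:ℚ)^(k-(m'+1)+1) * ((l:ℚ)+1)/2 + (-1:ℚ)^(k-(m'+1+1)+1) * ((l:ℚ)+1)/2 = 0 := by
    rw [show k-(m'+1)+1 = (k-(m'+1+1)+1)+1 from by omega, pow_succ]
    ring
  rw [show m'+1+1 - (m'+1) = 1 from by omega]
  linear_combination z1 + z2 + z3

lemma step (l k : ℕ) (idx : ℕ → ℕ) (m : ℕ) (h1 : 1 ≤ m) (h2 : m < k) :
    Fm l k idx m = Fm l k idx (m+1) := by
  obtain ⟨m', rfl⟩ : ∃ m', m = m' + 1 := ⟨m - 1, by omega⟩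
  have pair := hval_pair l k idx (m'+1) (by omega) h2
  unfold Fm
  simp only [Nat.add_sub_cancel]
  rw [Finset.sum_Icc_succ_top (show 1 ≤ m'+1 by omega) (fun t => (idx t:ℚ) * Hval l k idx t)]
  rw [sum_Icc_bot (fun t => ((l:ℚ) - (idx t:ℚ) + 1) * Hval l k idx t) (show m'+1+1 ≤ k by omega)]
  linear_combination (((l:ℚ)+1)/2) * pair

lemma bsum (k : ℕ) (idx : ℕ → ℕ) :
    ∑ t ∈ Finset.Icc 1 k, (idx t : ℚ) * Bval k idx t = 0 := by
  induction k with
  | zero => simp [Bval]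
  | succ n ih =>
    rw [Finset.sum_Icc_succ_top (by omega : 1 ≤ n+1)]
    have hB : ∀ t ∈ Finset.Icc 1 n, (idx t:ℚ) * Bval (n+1) idx t
        = (idx t:ℚ) * Bval n idx t + (-1:ℚ)^(n+1-t) * (idx t:ℚ) * (idx (n+1):ℚ) := by
      intro t ht
      simp only [Finset.mem_Icc] at ht
      unfold Bval
      rw [Finset.sum_Icc_succ_top (by omega : t+1 ≤ n+1) (fun s => (-1:ℚ)^(s-t) * (idx s:ℚ))]
      ring
    rw [Finset.sum_congr rfl hB, Finset.sum_add_distrib, ih]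
    unfold Bval
    rw [show Finset.Icc (n+1+1) (n+1) = ∅ from Finset.Icc_eq_empty (by omega)]
    simp only [Finset.sum_empty, Nat.add_sub_cancel, zero_add]
    rw [Finset.mul_sum, ← Finset.sum_add_distrib]
    apply Finset.sum_eq_zero
    intro s hs
    rw [pow_succ]
    ring

lemma asum (l k : ℕ) (idx : ℕ → ℕ) :
    ∑ t ∈ Finset.Icc 1 k, (idx t : ℚ) * Hval l k idx t
      = -(((l:ℚ)+1)/2) * ∑ s ∈ Finset.Icc 1 k, (-1:ℚ)^(k-s) * (idx s : ℚ) := by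
  have key : ∀ t, (idx t:ℚ) * Hval l k idx t
      = (idx t:ℚ) * Bval k idx t + (-(((l:ℚ)+1)/2)) * ((-1:ℚ)^(k-t) * (idx t:ℚ)) := by
    intro t
    unfold Hval Bval
    rw [pow_succ]
    ring
  rw [Finset.sum_congr rfl (fun t _ => key t), Finset.sum_add_distrib, bsum,
    ← Finset.mul_sum]
  ring

lemma fk_zero (l k : ℕ) (idx : ℕ → ℕ) (hk : 1 ≤ k) : Fm l k idx k = 0 := by
  obtain ⟨k', rfl⟩ : ∃ k', k = k' + 1 := ⟨k - 1, by omega⟩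
  have hA := asum l (k'+1) idx
  rw [Finset.sum_Icc_succ_top (by omega : 1 ≤ k'+1)
      (fun t => (idx t:ℚ) * Hval l (k'+1) idx t),
    Finset.sum_Icc_succ_top (by omega : 1 ≤ k'+1)
      (fun s => (-1:ℚ)^(k'+1-s) * (idx s:ℚ))] at hA
  rw [Nat.sub_self, pow_zero, one_mul] at hA
  have e3 : Hval l (k'+1) idx (k'+1)
      + ∑ s ∈ Finset.Icc 1 k', (-1:ℚ)^(k'+1-s) * (idx s:ℚ) = -(((l:ℚ)+1)/2) := by
    unfold Hval
    rw [show Finset.Icc (k'+1+1) (k'+1) = ∅ from Finset.Icc_eq_empty (by omega)]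
    simp only [Finset.sum_empty, Nat.add_sub_cancel, zero_add]
    rw [show k'+1-(k'+1)+1 = 1 from by omega]
    have z : (∑ s ∈ Finset.Icc 1 k', (-1:ℚ)^(k'+1-s+1) * (idx s:ℚ))
        + ∑ s ∈ Finset.Icc 1 k', (-1:ℚ)^(k'+1-s) * (idx s:ℚ) = 0 := by
      rw [← Finset.sum_add_distrib]
      exact Finset.sum_eq_zero fun s hs => by rw [pow_succ]; ring
    linear_combination z
  unfold Fm
  rw [show Finset.Icc (k'+1+1) (k'+1) = ∅ from Finset.Icc_eq_empty (by omega)]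
  simp only [Finset.sum_empty, Nat.add_sub_cancel, add_zero]
  linear_combination (-1:ℚ) * hA + (((l:ℚ)+1)/2) * e3

lemma fm_zero (l k : ℕ) (idx : ℕ → ℕ) (m : ℕ) (h1 : 1 ≤ m) (h2 : m ≤ k) :
    Fm l k idx m = 0 := by
  obtain ⟨d, hd⟩ : ∃ d, m + d = k := ⟨k - m, by omega⟩
  induction d generalizing m with
  | zero => subst hd; simpa using fk_zero l m idx (by omega)
  | succ n ih =>
      rw [step l k idx m h1 (by omega)]
      exact ih (m+1) (by omega) (by omega) (by omega)

lemma hfun_eq (l k : ℕ) (idx : ℕ → ℕ) (hmono : StrictMonoOn idx (Set.Icc 1 k))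
    (m : ℕ) (hm : m ∈ Finset.Icc 1 k) : hfun l k idx (idx m) = Hval l k idx m := by
  unfold hfun
  have key : ∀ j ∈ Finset.Icc 1 k,
      (if idx j = idx m then Hval l k idx j else 0)
        = if j = m then Hval l k idx j else 0 := by
    intro j hj
    by_cases h : j = m
    · simp [h]
    · rw [if_neg h, if_neg]
      intro he
      simp only [Finset.mem_Icc] at hj hm
      exact h (hmono.injOn (Set.mem_Icc.mpr hj) (Set.mem_Icc.mpr hm) he)
  rw [Finset.sum_congr rfl key, Finset.sum_ite_eq' (Finset.Icc 1 k) m, if_pos hm]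

lemma hfun_zero (l k : ℕ) (idx : ℕ → ℕ) (n : ℕ)
    (h : ∀ j ∈ Finset.Icc 1 k, idx j ≠ n) : hfun l k idx n = 0 :=
  Finset.sum_eq_zero fun j hj => if_neg (h j hj)

lemma wsum (l k : ℕ) (idx : ℕ → ℕ) (w : ℕ → ℚ) (R : Finset ℕ) :
    ∑ j ∈ R, w j * hfun l k idx j
      = ∑ t ∈ Finset.Icc 1 k, if idx t ∈ R then w (idx t) * Hval l k idx t else 0 := by
  unfold hfun
  simp_rw [Finset.mul_sum, mul_ite, mul_zero]
  rw [Finset.sum_comm]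
  exact Finset.sum_congr rfl fun t _ =>
    Finset.sum_ite_eq R (idx t) (fun j => w j * Hval l k idx t)

/-- For `l ≥ 2` even and `S = {i_1 < ⋯ < i_k} ⊆ {1,…,l}`, the tuple
`(h_1,…,h_l)` defined by the alternating-sum formula on `S` and `0` off `S` satisfies,
for every `i ∈ {1,…,l}`:
`h i * (−Σ_{j=1}^{i−1} j·h j + ((l−2i+1)/2)·h i + Σ_{j=i+1}^{l} (l−j+1)·h j + (l+1)²/4 − i(l+1)/2) = 0`. -/
theorem subset_solution_satisfies_system (l k : ℕ) (hl2 : 2 ≤ l) (hleven : Even l)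
    (idx : ℕ → ℕ) (hmono : StrictMonoOn idx (Set.Icc 1 k))
    (hrange : ∀ j ∈ Finset.Icc 1 k, idx j ∈ Finset.Icc 1 l) :
    ∀ i ∈ Finset.Icc 1 l,
      hfun l k idx i * (-(∑ j ∈ Finset.Icc 1 (i - 1), (j : ℚ) * hfun l k idx j)
        + ((l : ℚ) - 2 * i + 1) / 2 * hfun l k idx i
        + (∑ j ∈ Finset.Icc (i + 1) l, ((l : ℚ) - j + 1) * hfun l k idx j)
        + ((l : ℚ) + 1) ^ 2 / 4 - (i : ℚ) * ((l : ℚ) + 1) / 2) = 0 := by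
  intro i hi
  by_cases hx : ∃ m ∈ Finset.Icc 1 k, idx m = i
  · obtain ⟨m, hm, rfl⟩ := hx
    have hm' := Finset.mem_Icc.mp hm
    have hrg : ∀ t ∈ Finset.Icc 1 k, 1 ≤ idx t ∧ idx t ≤ l := by
      intro t ht; exact Finset.mem_Icc.mp (hrange t ht)
    have hlt : ∀ t, t ∈ Finset.Icc 1 k → (idx t < idx m ↔ t < m) := by
      intro t ht
      have ht' := Finset.mem_Icc.mp ht
      exact hmono.lt_iff_lt (Set.mem_Icc.mpr ht') (Set.mem_Icc.mpr hm')
    have s1 : ∑ j ∈ Finset.Icc 1 (idx m - 1), (j : ℚ) * hfun l k idx j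
        = ∑ t ∈ Finset.Icc 1 (m-1), (idx t : ℚ) * Hval l k idx t := by
      rw [wsum l k idx (fun j => (j : ℚ)) _, ← Finset.sum_filter]
      apply Finset.sum_congr _ (fun t _ => rfl)
      ext t
      simp only [Finset.mem_filter, Finset.mem_Icc]
      constructor
      · rintro ⟨⟨ht1, ht2⟩, h3, h4⟩
        have := (hlt t (Finset.mem_Icc.mpr ⟨ht1, ht2⟩)).mp (by
          have := (hrg m hm).1; omega)
        omega
      · rintro ⟨ht1, ht2⟩
        have htk : t ∈ Finset.Icc 1 k := Finset.mem_Icc.mpr ⟨ht1, by omega⟩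
        have h5 := (hlt t htk).mpr (by omega)
        have h6 := (hrg t htk).1
        exact ⟨⟨ht1, by omega⟩, by omega, by omega⟩
    have s2 : ∑ j ∈ Finset.Icc (idx m + 1) l, ((l : ℚ) - j + 1) * hfun l k idx j
        = ∑ t ∈ Finset.Icc (m+1) k, ((l:ℚ) - idx t + 1) * Hval l k idx t := by
      rw [wsum l k idx (fun j => (l : ℚ) - j + 1) _, ← Finset.sum_filter]
      apply Finset.sum_congr _ (fun t _ => rfl)
      ext t
      simp only [Finset.mem_filter, Finset.mem_Icc]
      constructor
      · rintro ⟨⟨ht1, ht2⟩, h3, h4⟩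
        have hgt : idx m < idx t := by omega
        refine ⟨?_, ht2⟩
        by_contra hc
        have hle : idx t ≤ idx m := hmono.monotoneOn
          (Set.mem_Icc.mpr ⟨ht1, ht2⟩) (Set.mem_Icc.mpr hm') (by omega)
        omega
      · rintro ⟨ht1, ht2⟩
        have htk : t ∈ Finset.Icc 1 k := Finset.mem_Icc.mpr ⟨by omega, ht2⟩
        have h5 : ¬ (idx t < idx m) := by
          rw [hlt t htk]; omega
        have h6 := (hrg t htk)
        have h7 : idx t ≠ idx m := by
          intro he
          have := hmono.injOn (Set.mem_Icc.mpr (Finset.mem_Icc.mp htk))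
            (Set.mem_Icc.mpr hm') he
          omega
        exact ⟨⟨by omega, ht2⟩, by omega, h6.2⟩
    rw [hfun_eq l k idx hmono m hm, s1, s2]
    have hF := fm_zero l k idx m hm'.1 hm'.2
    unfold Fm at hF
    linear_combination Hval l k idx m * hF
  · push_neg at hx
    rw [hfun_zero l k idx i hx, zero_mul]
end

section
/- Let l ≥ 2 be even. Every solution (h_1,…,h_l) ∈ ℂ^l of the system h_i·( −Σ_{j=1}^{i−1} j·h_j + ((l−2i+1)/2)·h_i + Σ_{j=i+1}^{l} (l−j+1)·h_j + (l+1)²/4 − i(l+1)/2 ) = 0 for i = 1,…,l is of the following form: there is a subset S = {i_1 < ⋯ < i_k} ⊆ {1,…,l} such that h_i = 0 for i ∉ S and h_{i_j} = Σ_{s=j+1}^{k} (−1)^{s−j} i_s + Σ_{s=1}^{j−1} (−1)^{j−s+1} i_s + (−1)^{k−j+1}(l+1)/2 for all j. In particular, the system has exactly 2^l solutions. -/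
/-- Complex version of the alternating-sum value `h_{i_j}` attached to the `j`-th element
(1-based) of `S = {idx 1 < ⋯ < idx k} ⊆ {1,…,l}`. -/
noncomputable def HvalC (l k : ℕ) (idx : ℕ → ℕ) (j : ℕ) : ℂ :=
  (∑ s ∈ Finset.Icc (j + 1) k, (-1 : ℂ) ^ (s - j) * (idx s : ℂ))
    + (∑ s ∈ Finset.Icc 1 (j - 1), (-1 : ℂ) ^ (j - s + 1) * (idx s : ℂ))
    + (-1 : ℂ) ^ (k - j + 1) * ((l : ℂ) + 1) / 2

/-- The tuple `(h_1, …, h_l)` attached to `S`: `h n = h_{i_j}` if `n = i_j ∈ S`, else `0`. -/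
noncomputable def hfunC (l k : ℕ) (idx : ℕ → ℕ) (n : ℕ) : ℂ :=
  ∑ j ∈ Finset.Icc 1 k, if idx j = n then HvalC l k idx j else 0

/-- The system of `l` polynomial equations in `h 1, …, h l`. -/
def SatisfiesSystem (l : ℕ) (h : ℕ → ℂ) : Prop :=
  ∀ i ∈ Finset.Icc 1 l,
    h i * (-(∑ j ∈ Finset.Icc 1 (i - 1), (j : ℂ) * h j)
      + ((l : ℂ) - 2 * i + 1) / 2 * h i
      + (∑ j ∈ Finset.Icc (i + 1) l, ((l : ℂ) - j + 1) * h j)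
      + ((l : ℂ) + 1) ^ 2 / 4 - (i : ℂ) * ((l : ℂ) + 1) / 2) = 0

set_option linter.unnecessarySimpa false

open Finset



/-- The bracket in equation `i`. -/
noncomputable def Efun (l : ℕ) (h : ℕ → ℂ) (i : ℕ) : ℂ :=
  -(∑ j ∈ Finset.Icc 1 (i - 1), (j : ℂ) * h j)
      + ((l : ℂ) - 2 * i + 1) / 2 * h i
      + (∑ j ∈ Finset.Icc (i + 1) l, ((l : ℂ) - j + 1) * h j)
      + ((l : ℂ) + 1) ^ 2 / 4 - (i : ℂ) * ((l : ℂ) + 1) / 2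

lemma chainE (l : ℕ) (h : ℕ → ℂ) (i : ℕ) (h1 : 1 ≤ i) (h2 : i < l) :
    Efun l h i = Efun l h (i + 1) + ((l : ℂ) + 1) / 2 * (h i + h (i + 1) + 1) := by
  obtain ⟨m, rfl⟩ : ∃ m, i = m + 1 := ⟨i - 1, by omega⟩
  unfold Efun
  rw [show m + 1 + 1 - 1 = m + 1 from rfl, show m + 1 - 1 = m from rfl,
    Finset.sum_Icc_succ_top (by omega : 1 ≤ m + 1) (fun j => (j : ℂ) * h j),
    show Finset.Icc (m + 1 + 1) l = insert (m + 1 + 1) (Finset.Icc (m + 1 + 1 + 1) l) by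
      ext a; simp only [Finset.mem_Icc, Finset.mem_insert]; omega,
    Finset.sum_insert (by simp [Finset.mem_Icc])]
  push_cast
  ring

lemma anchorE (l : ℕ) (h : ℕ → ℂ) (hl : 1 ≤ l) :
    Efun l h l = -(∑ j ∈ Finset.Icc 1 l, (j : ℂ) * h j) + ((l : ℂ) + 1) / 2 * h l
      - ((l : ℂ) ^ 2 - 1) / 4 := by
  obtain ⟨m, rfl⟩ : ∃ m, l = m + 1 := ⟨l - 1, by omega⟩
  unfold Efun
  rw [show m + 1 - 1 = m from rfl, Finset.Icc_eq_empty (show ¬(m+1+1 ≤ m+1) by omega), Finset.sum_empty,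
    Finset.sum_Icc_succ_top (by omega : 1 ≤ m + 1) (fun j => (j : ℂ) * h j)]
  push_cast
  ring

lemma teleE (l : ℕ) (h : ℕ → ℂ) (m n : ℕ) (hm : 1 ≤ m) (hmn : m + 1 ≤ n) (hnl : n ≤ l)
    (hz : ∀ t, m < t → t < n → h t = 0) :
    Efun l h m = Efun l h n + ((l : ℂ) + 1) / 2 * (h m + h n + ((n : ℂ) - (m : ℂ))) := by
  induction n, hmn using Nat.le_induction with
  | base =>
      rw [chainE l h m hm (by omega)]
      push_cast; ring
  | succ n hn ih =>
      have hhn : h n = 0 := hz n (by omega) (by omega)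
      have e1 := ih (by omega) (fun t ht1 ht2 => hz t ht1 (by omega))
      rw [e1, chainE l h n (by omega) (by omega), hhn]
      push_cast; ring



/-- `(z : ℂ) ≠ ((l:ℂ)+1)/2` for integers `z`, when `l` is even. -/
lemma int_ne_half (l : ℕ) (hleven : Even l) (z : ℤ) : (z : ℂ) ≠ ((l : ℂ) + 1) / 2 := by
  intro hzc
  have h2 : ((2 * z : ℤ) : ℂ) = ((l + 1 : ℤ) : ℂ) := by
    push_cast
    field_simp at hzc
    linear_combination hzc
  have h3 : (2 * z : ℤ) = (l + 1 : ℤ) := by exact_mod_cast h2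
  obtain ⟨r, hr⟩ := hleven
  omega

lemma Hval_ne_zero (l k : ℕ) (hleven : Even l) (idx : ℕ → ℕ) (j : ℕ) :
    HvalC l k idx j ≠ 0 := by
  intro h0
  set z : ℤ := (∑ s ∈ Finset.Icc (j + 1) k, (-1 : ℤ) ^ (s - j) * (idx s : ℤ))
    + (∑ s ∈ Finset.Icc 1 (j - 1), (-1 : ℤ) ^ (j - s + 1) * (idx s : ℤ)) with hz
  have hcast : HvalC l k idx j = (z : ℂ) + (-1 : ℂ) ^ (k - j + 1) * (((l : ℂ) + 1) / 2) := by
    rw [hz]; unfold HvalC; push_cast; ring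
  rw [hcast] at h0
  rcases Nat.even_or_odd (k - j + 1) with he | ho
  · rw [he.neg_one_pow, one_mul] at h0
    exact int_ne_half l hleven (-z) (by push_cast; linear_combination -h0)
  · rw [ho.neg_one_pow, neg_one_mul] at h0
    exact int_ne_half l hleven z (by linear_combination h0)

lemma Hval_rec (l k : ℕ) (idx : ℕ → ℕ) (j : ℕ) (hj1 : 1 ≤ j) (hjk : j < k) :
    HvalC l k idx j + HvalC l k idx (j + 1) = (idx j : ℂ) - (idx (j + 1) : ℂ) := by
  unfold HvalC
  have hA : ∑ s ∈ Finset.Icc (j + 1) k, (-1 : ℂ) ^ (s - j) * (idx s : ℂ)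
      = -(idx (j + 1) : ℂ)
        - ∑ s ∈ Finset.Icc (j + 1 + 1) k, (-1 : ℂ) ^ (s - (j + 1)) * (idx s : ℂ) := by
    rw [show Finset.Icc (j + 1) k = insert (j + 1) (Finset.Icc (j + 2) k) by
        ext a; simp only [Finset.mem_Icc, Finset.mem_insert]; omega,
      Finset.sum_insert (by simp [Finset.mem_Icc])]
    rw [show j + 1 - j = 1 by omega, pow_one,
      show (∑ s ∈ Finset.Icc (j + 2) k, (-1 : ℂ) ^ (s - j) * (idx s : ℂ))
        = ∑ s ∈ Finset.Icc (j + 2) k, -((-1 : ℂ) ^ (s - (j + 1)) * (idx s : ℂ)) from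
        Finset.sum_congr rfl (fun s hs => by
          have hs' : j + 2 ≤ s := (Finset.mem_Icc.mp hs).1
          rw [show s - j = (s - (j + 1)) + 1 by omega, pow_succ]; ring),
      Finset.sum_neg_distrib]
    ring
  have hB : ∑ s ∈ Finset.Icc 1 (j + 1 - 1), (-1 : ℂ) ^ (j + 1 - s + 1) * (idx s : ℂ)
      = (idx j : ℂ)
        - ∑ s ∈ Finset.Icc 1 (j - 1), (-1 : ℂ) ^ (j - s + 1) * (idx s : ℂ) := by
    obtain ⟨m, rfl⟩ : ∃ m, j = m + 1 := ⟨j - 1, by omega⟩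
    rw [show m + 1 + 1 - 1 = m + 1 from rfl, show m + 1 - 1 = m from rfl,
      Finset.sum_Icc_succ_top (by omega : 1 ≤ m + 1)
        (fun s => (-1 : ℂ) ^ (m + 1 + 1 - s + 1) * (idx s : ℂ)),
      show m + 1 + 1 - (m + 1) + 1 = 2 by omega,
      show (∑ s ∈ Finset.Icc 1 m, (-1 : ℂ) ^ (m + 1 + 1 - s + 1) * (idx s : ℂ))
        = ∑ s ∈ Finset.Icc 1 m, -((-1 : ℂ) ^ (m + 1 - s + 1) * (idx s : ℂ)) from
        Finset.sum_congr rfl (fun s hs => by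
          have hs' : s ≤ m := (Finset.mem_Icc.mp hs).2
          rw [show m + 1 + 1 - s + 1 = (m + 1 - s + 1) + 1 by omega, pow_succ]; ring),
      Finset.sum_neg_distrib]
    norm_num
    ring
  rw [hA, hB, show k - j + 1 = (k - j - 1) + 1 + 1 by omega,
    show k - (j + 1) + 1 = (k - j - 1) + 1 by omega, pow_succ]
  ring

lemma Hval_anchor (l k : ℕ) (idx : ℕ → ℕ) (hk : 1 ≤ k) :
    ∑ j ∈ Finset.Icc 1 k, (idx j : ℂ) * HvalC l k idx j
      = ((l : ℂ) + 1) / 2 * HvalC l k idx k - ((l : ℂ) ^ 2 - 1) / 4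
        + ((l : ℂ) + 1) / 2 * ((l : ℂ) - (idx k : ℂ)) := by
  obtain ⟨m, rfl⟩ : ∃ m, k = m + 1 := ⟨k - 1, by omega⟩
  have expand : ∀ j, (idx j : ℂ) * HvalC l (m + 1) idx j
      = (∑ s ∈ Finset.Icc (j + 1) (m + 1), (idx j : ℂ) * ((-1 : ℂ) ^ (s - j) * (idx s : ℂ)))
        + (∑ s ∈ Finset.Icc 1 (j - 1), (idx j : ℂ) * ((-1 : ℂ) ^ (j - s + 1) * (idx s : ℂ)))
        + (idx j : ℂ) * ((-1 : ℂ) ^ (m + 1 - j + 1) * ((l : ℂ) + 1) / 2) := by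
    intro j; unfold HvalC; rw [mul_add, mul_add, Finset.mul_sum, Finset.mul_sum]
  rw [Finset.sum_congr rfl (fun j _ => expand j), Finset.sum_add_distrib,
    Finset.sum_add_distrib]
  -- swap the second (lower-triangular) double sum
  have hswap : (∑ j ∈ Finset.Icc 1 (m + 1), ∑ s ∈ Finset.Icc 1 (j - 1),
        (idx j : ℂ) * ((-1 : ℂ) ^ (j - s + 1) * (idx s : ℂ)))
      = ∑ s ∈ Finset.Icc 1 (m + 1), ∑ j ∈ Finset.Icc (s + 1) (m + 1),
        (idx j : ℂ) * ((-1 : ℂ) ^ (j - s + 1) * (idx s : ℂ)) := by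
    apply Finset.sum_comm'
    intro x y; simp only [Finset.mem_Icc]; omega
  rw [hswap]
  have hcancel : (∑ j ∈ Finset.Icc 1 (m + 1), ∑ s ∈ Finset.Icc (j + 1) (m + 1),
        (idx j : ℂ) * ((-1 : ℂ) ^ (s - j) * (idx s : ℂ)))
      + (∑ s ∈ Finset.Icc 1 (m + 1), ∑ j ∈ Finset.Icc (s + 1) (m + 1),
        (idx j : ℂ) * ((-1 : ℂ) ^ (j - s + 1) * (idx s : ℂ))) = 0 := by
    rw [← Finset.sum_add_distrib]
    apply Finset.sum_eq_zero
    intro a _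
    rw [← Finset.sum_add_distrib]
    apply Finset.sum_eq_zero
    intro b _
    rw [pow_succ]
    ring
  -- split the diagonal sum at the top index
  have h3 : (∑ j ∈ Finset.Icc 1 (m + 1),
        (idx j : ℂ) * ((-1 : ℂ) ^ (m + 1 - j + 1) * ((l : ℂ) + 1) / 2))
      = (∑ s ∈ Finset.Icc 1 m, (-1 : ℂ) ^ (m + 1 - s + 1) * (idx s : ℂ))
          * (((l : ℂ) + 1) / 2)
        - (idx (m + 1) : ℂ) * (((l : ℂ) + 1) / 2) := by
    rw [Finset.sum_Icc_succ_top (by omega : 1 ≤ m + 1), Finset.sum_mul,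
      show m + 1 - (m + 1) + 1 = 1 by omega, pow_one]
    have h3' : (∑ j ∈ Finset.Icc 1 m, (idx j : ℂ) * ((-1 : ℂ) ^ (m + 1 - j + 1) * ((l : ℂ) + 1) / 2))
        = ∑ j ∈ Finset.Icc 1 m, ((-1 : ℂ) ^ (m + 1 - j + 1) * (idx j : ℂ)) * (((l : ℂ) + 1) / 2) :=
      Finset.sum_congr rfl (fun j _ => by ring)
    rw [h3']
    ring
  have hHk : HvalC l (m + 1) idx (m + 1)
      = (∑ s ∈ Finset.Icc 1 m, (-1 : ℂ) ^ (m + 1 - s + 1) * (idx s : ℂ))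
        - ((l : ℂ) + 1) / 2 := by
    unfold HvalC
    rw [Finset.Icc_eq_empty (show ¬(m + 1 + 1 ≤ m + 1) by omega), Finset.sum_empty,
      show m + 1 - (m + 1) + 1 = 1 by omega, pow_one, show m + 1 - 1 = m from rfl]
    ring
  rw [hHk, h3]
  linear_combination hcancel



lemma reduced_uniq (l k : ℕ) (hleven : Even l) (idx : ℕ → ℕ) (hk : 1 ≤ k) (H H' : ℕ → ℂ)
    (hR : ∀ j, 1 ≤ j → j < k → H j + H (j + 1) = (idx j : ℂ) - (idx (j + 1) : ℂ))
    (hR' : ∀ j, 1 ≤ j → j < k → H' j + H' (j + 1) = (idx j : ℂ) - (idx (j + 1) : ℂ))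
    (hA : ∑ j ∈ Finset.Icc 1 k, (idx j : ℂ) * H j
      = ((l : ℂ) + 1) / 2 * H k - ((l : ℂ) ^ 2 - 1) / 4
        + ((l : ℂ) + 1) / 2 * ((l : ℂ) - (idx k : ℂ)))
    (hA' : ∑ j ∈ Finset.Icc 1 k, (idx j : ℂ) * H' j
      = ((l : ℂ) + 1) / 2 * H' k - ((l : ℂ) ^ 2 - 1) / 4
        + ((l : ℂ) + 1) / 2 * ((l : ℂ) - (idx k : ℂ))) :
    ∀ j, 1 ≤ j → j ≤ k → H j = H' j := by
  set D : ℕ → ℂ := fun j => H j - H' j with hD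
  have step1 : ∀ t, t ≤ k - 1 → D (k - t) = (-1 : ℂ) ^ t * D k := by
    intro t
    induction t with
    | zero => intro _; simp
    | succ t ih =>
        intro ht
        have h1 : 1 ≤ k - t - 1 := by omega
        have h2 : k - t - 1 < k := by omega
        have e1 := hR (k - t - 1) h1 h2
        have e2 := hR' (k - t - 1) h1 h2
        have e3 : k - t - 1 + 1 = k - t := by omega
        rw [e3] at e1 e2
        have e4 : D (k - t - 1) = -D (k - t) := by
          simp only [hD]; linear_combination e1 - e2
        have e5 : k - (t + 1) = k - t - 1 := by omega
        rw [e5, e4, ih (by omega), pow_succ]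
        ring
  have hDj : ∀ j, 1 ≤ j → j ≤ k → D j = (-1 : ℂ) ^ (k - j) * D k := by
    intro j h1 h2
    have := step1 (k - j) (by omega)
    rwa [show k - (k - j) = j by omega] at this
  have hsum : ∑ j ∈ Finset.Icc 1 k, (idx j : ℂ) * D j = ((l : ℂ) + 1) / 2 * D k := by
    simp only [hD]
    have : ∀ j ∈ Finset.Icc 1 k, (idx j : ℂ) * (H j - H' j)
        = (idx j : ℂ) * H j - (idx j : ℂ) * H' j := fun j _ => by ring
    rw [Finset.sum_congr rfl this, Finset.sum_sub_distrib, hA, hA']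
    ring
  have hsum2 : (∑ j ∈ Finset.Icc 1 k, (-1 : ℂ) ^ (k - j) * (idx j : ℂ)) * D k
      = ((l : ℂ) + 1) / 2 * D k := by
    rw [← hsum, Finset.sum_mul]
    apply Finset.sum_congr rfl
    intro j hj
    rw [Finset.mem_Icc] at hj
    rw [hDj j hj.1 hj.2]
    ring
  have hz : ∃ z : ℤ, (z : ℂ) = ∑ j ∈ Finset.Icc 1 k, (-1 : ℂ) ^ (k - j) * (idx j : ℂ) := by
    refine ⟨∑ j ∈ Finset.Icc 1 k, (-1 : ℤ) ^ (k - j) * (idx j : ℤ), ?_⟩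
    push_cast
    rfl
  obtain ⟨z, hzeq⟩ := hz
  have hDk : D k = 0 := by
    by_contra hne
    have : (z : ℂ) = ((l : ℂ) + 1) / 2 := by
      have h' : (z : ℂ) * D k = ((l : ℂ) + 1) / 2 * D k := by rw [hzeq]; exact hsum2
      exact mul_right_cancel₀ hne h'
    exact int_ne_half l hleven z this
  intro j h1 h2
  have := hDj j h1 h2
  rw [hDk, mul_zero] at this
  simp only [hD] at this
  linear_combination this



section Bridge

variable (l k : ℕ) (idx : ℕ → ℕ) (h : ℕ → ℂ)
variable (hmono : StrictMonoOn idx (Set.Icc 1 k))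
variable (hrange : ∀ j, 1 ≤ j → j ≤ k → 1 ≤ idx j ∧ idx j ≤ l)
variable (hzero : ∀ n, 1 ≤ n → n ≤ l → (∀ j, 1 ≤ j → j ≤ k → idx j ≠ n) → h n = 0)

include hmono in
lemma idx_mono_le : ∀ j j', 1 ≤ j → j ≤ j' → j' ≤ k → idx j ≤ idx j' := by
  intro j j' h1 h2 h3
  rcases eq_or_lt_of_le h2 with rfl | hlt
  · exact le_rfl
  · exact (hmono (Set.mem_Icc.mpr ⟨h1, by omega⟩) (Set.mem_Icc.mpr ⟨by omega, h3⟩) hlt).le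

include hmono hrange hzero in
lemma zeros_between : ∀ j, 1 ≤ j → j < k →
    ∀ t, idx j < t → t < idx (j + 1) → h t = 0 := by
  intro j h1 h2 t ht1 ht2
  have hr1 := hrange j h1 (by omega)
  have hr2 := hrange (j + 1) (by omega) (by omega)
  apply hzero t (by omega) (by omega)
  intro j'' hj1 hj2 heq
  rcases le_or_gt j'' j with hle | hgt
  · have := idx_mono_le k idx hmono j'' j hj1 hle (by omega)
    omega
  · have := idx_mono_le k idx hmono (j + 1) j'' (by omega) (by omega) hj2
    omega

include hmono hzero in
lemma zeros_above : ∀ t, idx k < t → t ≤ l → h t = 0 := by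
  intro t ht1 ht2
  apply hzero t (by omega) ht2
  intro j'' hj1 hj2 heq
  have := idx_mono_le k idx hmono j'' k hj1 hj2 le_rfl
  omega

include hmono hrange hzero in
lemma fact1 : ∀ j, 1 ≤ j → j < k →
    Efun l h (idx j) = Efun l h (idx (j + 1))
      + ((l : ℂ) + 1) / 2 * (h (idx j) + h (idx (j + 1))
        + ((idx (j + 1) : ℂ) - (idx j : ℂ))) := by
  intro j h1 h2
  have hr1 := hrange j h1 (by omega)
  have hr2 := hrange (j + 1) (by omega) (by omega)
  have hlt : idx j < idx (j + 1) :=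
    hmono (Set.mem_Icc.mpr ⟨h1, by omega⟩) (Set.mem_Icc.mpr ⟨by omega, by omega⟩) (by omega)
  exact teleE l h (idx j) (idx (j + 1)) hr1.1 (by omega) hr2.2
    (zeros_between l k idx h hmono hrange hzero j h1 h2)

include hmono hrange hzero in
lemma sumsupp : ∑ n ∈ Finset.Icc 1 l, (n : ℂ) * h n
    = ∑ j ∈ Finset.Icc 1 k, (idx j : ℂ) * h (idx j) := by
  have hinj : ∀ x ∈ Finset.Icc 1 k, ∀ y ∈ Finset.Icc 1 k, idx x = idx y → x = y := by
    intro x hx y hy hxy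
    simp only [Finset.mem_Icc] at hx hy
    exact hmono.injOn (Set.mem_Icc.mpr hx) (Set.mem_Icc.mpr hy) hxy
  have himg : ∑ n ∈ (Finset.Icc 1 k).image idx, (n : ℂ) * h n
      = ∑ j ∈ Finset.Icc 1 k, (idx j : ℂ) * h (idx j) := Finset.sum_image hinj
  rw [← himg]
  apply (Finset.sum_subset ?_ ?_).symm
  · intro x hx
    simp only [Finset.mem_image, Finset.mem_Icc] at hx ⊢
    obtain ⟨j, hj, rfl⟩ := hx
    exact hrange j hj.1 hj.2
  · intro x hx hnx
    simp only [Finset.mem_image, Finset.mem_Icc] at hx hnx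
    have hx0 : h x = 0 := by
      apply hzero x hx.1 hx.2
      intro j hj1 hj2 heq
      exact hnx ⟨j, ⟨hj1, hj2⟩, heq⟩
    rw [hx0, mul_zero]

include hmono hrange hzero in
lemma fact3 (hk : 1 ≤ k) (hl : 1 ≤ l) :
    Efun l h (idx k) = -(∑ j ∈ Finset.Icc 1 k, (idx j : ℂ) * h (idx j))
      + ((l : ℂ) + 1) / 2 * h (idx k)
      + ((l : ℂ) + 1) / 2 * ((l : ℂ) - (idx k : ℂ)) - ((l : ℂ) ^ 2 - 1) / 4 := by
  have hr := hrange k hk le_rfl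
  have hanch := anchorE l h hl
  rw [sumsupp l k idx h hmono hrange hzero] at hanch
  rcases eq_or_lt_of_le hr.2 with heq | hlt
  · rw [heq, hanch]
    ring
  · have h0 : h l = 0 := zeros_above l k idx h hmono hzero l hlt le_rfl
    have htel := teleE l h (idx k) l hr.1 (by omega) le_rfl
      (fun t ht1 ht2 => zeros_above l k idx h hmono hzero t ht1 (by omega))
    rw [htel, hanch, h0]
    ring

end Bridge


lemma sat_iff (l : ℕ) (h : ℕ → ℂ) :
    SatisfiesSystem l h ↔ ∀ i ∈ Finset.Icc 1 l, h i * Efun l h i = 0 := Iff.rfl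

lemma c_ne_zero (l : ℕ) : ((l : ℂ) + 1) / 2 ≠ 0 := by
  have h1 : ((l + 1 : ℕ) : ℂ) ≠ 0 := Nat.cast_ne_zero.mpr (Nat.succ_ne_zero l)
  push_cast at h1
  exact div_ne_zero h1 two_ne_zero

section Dir

variable (l k : ℕ) (idx : ℕ → ℕ) (h : ℕ → ℂ)
variable (hmono : StrictMonoOn idx (Set.Icc 1 k))
variable (hrange : ∀ j, 1 ≤ j → j ≤ k → 1 ≤ idx j ∧ idx j ≤ l)
variable (hzero : ∀ n, 1 ≤ n → n ≤ l → (∀ j, 1 ≤ j → j ≤ k → idx j ≠ n) → h n = 0)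

include hmono hrange hzero in
lemma dirA (hl : 1 ≤ l) (hk : 1 ≤ k) (hsat : SatisfiesSystem l h)
    (hne : ∀ j, 1 ≤ j → j ≤ k → h (idx j) ≠ 0) :
    (∀ j, 1 ≤ j → j < k →
        h (idx j) + h (idx (j + 1)) = (idx j : ℂ) - (idx (j + 1) : ℂ)) ∧
      (∑ j ∈ Finset.Icc 1 k, (idx j : ℂ) * h (idx j)
        = ((l : ℂ) + 1) / 2 * h (idx k) - ((l : ℂ) ^ 2 - 1) / 4
          + ((l : ℂ) + 1) / 2 * ((l : ℂ) - (idx k : ℂ))) := by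
  have hsat' : ∀ i ∈ Finset.Icc 1 l, h i * Efun l h i = 0 := hsat
  have E0 : ∀ j, 1 ≤ j → j ≤ k → Efun l h (idx j) = 0 := by
    intro j h1 h2
    have hr := hrange j h1 h2
    have := hsat' (idx j) (Finset.mem_Icc.mpr ⟨hr.1, hr.2⟩)
    exact (mul_eq_zero.mp this).resolve_left (hne j h1 h2)
  constructor
  · intro j h1 h2
    have hf := fact1 l k idx h hmono hrange hzero j h1 h2
    rw [E0 j h1 (le_of_lt h2), E0 (j + 1) (by omega) (by omega)] at hf
    have hX : h (idx j) + h (idx (j + 1)) + ((idx (j + 1) : ℂ) - (idx j : ℂ)) = 0 :=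
      (mul_eq_zero.mp (by linear_combination -hf)).resolve_left (c_ne_zero l)
    linear_combination hX
  · have hf := fact3 l k idx h hmono hrange hzero hk hl
    rw [E0 k hk le_rfl] at hf
    linear_combination hf

include hmono hrange hzero in
lemma dirB (hl : 1 ≤ l) (hk : 1 ≤ k)
    (hR : ∀ j, 1 ≤ j → j < k →
      h (idx j) + h (idx (j + 1)) = (idx j : ℂ) - (idx (j + 1) : ℂ))
    (hA : ∑ j ∈ Finset.Icc 1 k, (idx j : ℂ) * h (idx j)
      = ((l : ℂ) + 1) / 2 * h (idx k) - ((l : ℂ) ^ 2 - 1) / 4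
        + ((l : ℂ) + 1) / 2 * ((l : ℂ) - (idx k : ℂ))) :
    SatisfiesSystem l h := by
  have Ek : Efun l h (idx k) = 0 := by
    rw [fact3 l k idx h hmono hrange hzero hk hl]
    linear_combination -hA
  have Et : ∀ t, t ≤ k - 1 → Efun l h (idx (k - t)) = 0 := by
    intro t
    induction t with
    | zero => intro _; simpa using Ek
    | succ t ih =>
        intro ht
        have h1 : 1 ≤ k - t - 1 := by omega
        have h2 : k - t - 1 < k := by omega
        have hf := fact1 l k idx h hmono hrange hzero (k - t - 1) h1 h2
        have hr := hR (k - t - 1) h1 h2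
        have e3 : k - t - 1 + 1 = k - t := by omega
        rw [e3] at hf hr
        have e5 : k - (t + 1) = k - t - 1 := by omega
        rw [e5, hf, ih (by omega)]
        linear_combination (((l : ℂ) + 1) / 2) * hr
  have E0 : ∀ j, 1 ≤ j → j ≤ k → Efun l h (idx j) = 0 := by
    intro j h1 h2
    have := Et (k - j) (by omega)
    rwa [show k - (k - j) = j by omega] at this
  rw [sat_iff]
  intro i hi
  rw [Finset.mem_Icc] at hi
  by_cases hz0 : h i = 0
  · rw [hz0, zero_mul]
  · have hex : ∃ j, (1 ≤ j ∧ j ≤ k) ∧ idx j = i := by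
      by_contra hno
      apply hz0
      apply hzero i hi.1 hi.2
      intro j a b heq
      exact hno ⟨j, ⟨a, b⟩, heq⟩
    obtain ⟨j, ⟨hj1, hj2⟩, rfl⟩ := hex
    rw [E0 j hj1 hj2, mul_zero]

end Dir


lemma hfunC_eq_zero (l k : ℕ) (idx : ℕ → ℕ) (n : ℕ)
    (hno : ∀ j, 1 ≤ j → j ≤ k → idx j ≠ n) : hfunC l k idx n = 0 := by
  unfold hfunC
  apply Finset.sum_eq_zero
  intro j hj
  rw [Finset.mem_Icc] at hj
  rw [if_neg (hno j hj.1 hj.2)]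

lemma hfunC_apply (l k : ℕ) (idx : ℕ → ℕ) (hmono : StrictMonoOn idx (Set.Icc 1 k))
    (j : ℕ) (hj1 : 1 ≤ j) (hj2 : j ≤ k) :
    hfunC l k idx (idx j) = HvalC l k idx j := by
  unfold hfunC
  rw [Finset.sum_eq_single_of_mem j (Finset.mem_Icc.mpr ⟨hj1, hj2⟩)]
  · rw [if_pos rfl]
  · intro b hb hbj
    rw [Finset.mem_Icc] at hb
    rw [if_neg]
    intro heq
    exact hbj (hmono.injOn (Set.mem_Icc.mpr hb) (Set.mem_Icc.mpr ⟨hj1, hj2⟩) heq)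

noncomputable def idxF (S : Finset ℕ) : ℕ → ℕ :=
  fun j => if hj : j - 1 < S.card then S.orderEmbOfFin rfl ⟨j - 1, hj⟩ else 0

lemma idxF_mono (S : Finset ℕ) : StrictMonoOn (idxF S) (Set.Icc 1 S.card) := by
  intro a ha b hb hab
  simp only [Set.mem_Icc] at ha hb
  unfold idxF
  rw [dif_pos (by omega), dif_pos (by omega)]
  exact (S.orderEmbOfFin rfl).strictMono (by simp only [Fin.mk_lt_mk]; omega)

lemma idxF_mem (S : Finset ℕ) (j : ℕ) (h1 : 1 ≤ j) (h2 : j ≤ S.card) : idxF S j ∈ S := by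
  unfold idxF
  rw [dif_pos (by omega)]
  exact S.orderEmbOfFin_mem rfl _

lemma idxF_surj (S : Finset ℕ) (n : ℕ) (hn : n ∈ S) :
    ∃ j, (1 ≤ j ∧ j ≤ S.card) ∧ idxF S j = n := by
  have hmem : n ∈ Set.range (S.orderEmbOfFin rfl) := by
    rw [Finset.range_orderEmbOfFin]; exact hn
  obtain ⟨i, hi⟩ := hmem
  have hlt := i.isLt
  refine ⟨(i : ℕ) + 1, ⟨by omega, by omega⟩, ?_⟩
  unfold idxF
  rw [dif_pos (by simpa using hlt)]
  have : (⟨(i : ℕ) + 1 - 1, by simpa using hlt⟩ : Fin S.card) = i := by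
    apply Fin.ext; simp
  rw [this]
  exact hi

lemma classify (l : ℕ) (hl2 : 2 ≤ l) (hleven : Even l) (h : ℕ → ℂ)
    (hsat : SatisfiesSystem l h) :
    ∀ i ∈ Finset.Icc 1 l,
      h i = hfunC l ((Finset.Icc 1 l).filter (fun n => h n ≠ 0)).card
        (idxF ((Finset.Icc 1 l).filter (fun n => h n ≠ 0))) i := by
  set S : Finset ℕ := (Finset.Icc 1 l).filter (fun n => h n ≠ 0) with hSdef
  set k : ℕ := S.card
  set idx : ℕ → ℕ := idxF S
  have hmono : StrictMonoOn idx (Set.Icc 1 k) := idxF_mono S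
  have hmemS : ∀ j, 1 ≤ j → j ≤ k → idx j ∈ S := fun j h1 h2 => idxF_mem S j h1 h2
  have hrange : ∀ j, 1 ≤ j → j ≤ k → 1 ≤ idx j ∧ idx j ≤ l := by
    intro j h1 h2
    have := hmemS j h1 h2
    rw [hSdef, Finset.mem_filter, Finset.mem_Icc] at this
    exact this.1
  have hne : ∀ j, 1 ≤ j → j ≤ k → h (idx j) ≠ 0 := by
    intro j h1 h2
    have := hmemS j h1 h2
    rw [hSdef, Finset.mem_filter] at this
    exact this.2
  have hzero : ∀ n, 1 ≤ n → n ≤ l → (∀ j, 1 ≤ j → j ≤ k → idx j ≠ n) → h n = 0 := by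
    intro n hn1 hn2 hno
    by_contra hne0
    have hnS : n ∈ S := by
      rw [hSdef, Finset.mem_filter, Finset.mem_Icc]; exact ⟨⟨hn1, hn2⟩, hne0⟩
    obtain ⟨j, ⟨hj1, hj2⟩, hje⟩ := idxF_surj S n hnS
    exact hno j hj1 hj2 hje
  intro i hi
  rw [Finset.mem_Icc] at hi
  rcases Nat.eq_zero_or_pos k with hk0 | hk
  · have hno : ∀ j, 1 ≤ j → j ≤ k → idx j ≠ i := by intro j h1 h2; omega
    rw [hfunC_eq_zero l k idx i hno]
    exact hzero i hi.1 hi.2 hno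
  · obtain ⟨hR, hA⟩ := dirA l k idx h hmono hrange hzero (by omega) hk hsat hne
    have hR' := fun j h1 h2 => Hval_rec l k idx j h1 h2
    have hA' := Hval_anchor l k idx hk
    have huniq := reduced_uniq l k hleven idx hk (fun j => h (idx j)) (HvalC l k idx)
      hR hR' hA hA'
    by_cases hz0 : h i = 0
    · have hno : ∀ j, 1 ≤ j → j ≤ k → idx j ≠ i := by
        intro j h1 h2 heq
        exact hne j h1 h2 (heq ▸ hz0)
      rw [hfunC_eq_zero l k idx i hno, hz0]
    · have hnS : i ∈ S := by
        rw [hSdef, Finset.mem_filter, Finset.mem_Icc]; exact ⟨hi, hz0⟩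
      obtain ⟨j, ⟨hj1, hj2⟩, rfl⟩ := idxF_surj S i hnS
      rw [hfunC_apply l k idx hmono j hj1 hj2]
      exact huniq j hj1 hj2

lemma isSol (l : ℕ) (hl2 : 2 ≤ l) (S : Finset ℕ) (hS : S ⊆ Finset.Icc 1 l) :
    SatisfiesSystem l (hfunC l S.card (idxF S)) := by
  set k : ℕ := S.card
  set idx : ℕ → ℕ := idxF S
  set h : ℕ → ℂ := hfunC l k idx with hh
  have hmono : StrictMonoOn idx (Set.Icc 1 k) := idxF_mono S
  have hrange : ∀ j, 1 ≤ j → j ≤ k → 1 ≤ idx j ∧ idx j ≤ l := by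
    intro j h1 h2
    have := hS (idxF_mem S j h1 h2)
    rwa [Finset.mem_Icc] at this
  have happ : ∀ j, 1 ≤ j → j ≤ k → h (idx j) = HvalC l k idx j :=
    fun j h1 h2 => hfunC_apply l k idx hmono j h1 h2
  have hzero : ∀ n, 1 ≤ n → n ≤ l → (∀ j, 1 ≤ j → j ≤ k → idx j ≠ n) → h n = 0 :=
    fun n _ _ hno => hfunC_eq_zero l k idx n hno
  rcases Nat.eq_zero_or_pos k with hk0 | hk
  · rw [sat_iff]
    intro i hi
    rw [Finset.mem_Icc] at hi
    rw [hzero i hi.1 hi.2 (by intro j h1 h2; omega), zero_mul]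
  · apply dirB l k idx h hmono hrange hzero (by omega) hk
    · intro j h1 h2
      rw [happ j h1 (by omega), happ (j + 1) (by omega) h2]
      exact Hval_rec l k idx j h1 h2
    · have hs : ∑ j ∈ Finset.Icc 1 k, (idx j : ℂ) * h (idx j)
          = ∑ j ∈ Finset.Icc 1 k, (idx j : ℂ) * HvalC l k idx j :=
        Finset.sum_congr rfl (fun j hj => by
          rw [Finset.mem_Icc] at hj
          rw [happ j hj.1 hj.2])
      rw [happ k hk le_rfl, hs]
      exact Hval_anchor l k idx hk

lemma support_Phi (l : ℕ) (hleven : Even l) (S : Finset ℕ) (n : ℕ) :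
    hfunC l S.card (idxF S) n ≠ 0 ↔ n ∈ S := by
  constructor
  · intro hne
    by_contra hn
    apply hne
    apply hfunC_eq_zero
    intro j h1 h2 heq
    exact hn (heq ▸ idxF_mem S j h1 h2)
  · intro hn
    obtain ⟨j, ⟨hj1, hj2⟩, hje⟩ := idxF_surj S n hn
    rw [← hje, hfunC_apply l S.card (idxF S) (idxF_mono S) j hj1 hj2]
    exact Hval_ne_zero l S.card hleven (idxF S) j


/-- For `l ≥ 2` even, every solution of the system comes from a subset
`S = {i_1 < ⋯ < i_k} ⊆ {1,…,l}` via the alternating-sum formula; in particular the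
system has exactly `2^l` solutions. -/
theorem solutions_classified_by_subsets (l : ℕ) (hl2 : 2 ≤ l) (hleven : Even l) :
    (∀ h : ℕ → ℂ, SatisfiesSystem l h →
      ∃ (k : ℕ) (idx : ℕ → ℕ), StrictMonoOn idx (Set.Icc 1 k) ∧
        (∀ j ∈ Finset.Icc 1 k, idx j ∈ Finset.Icc 1 l) ∧
        (∀ i ∈ Finset.Icc 1 l, h i = hfunC l k idx i)) ∧
    Set.ncard {h : ℕ → ℂ |
      (∀ i, i ∉ Finset.Icc 1 l → h i = 0) ∧ SatisfiesSystem l h} = 2 ^ l := by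
  constructor
  · intro h hsat
    refine ⟨((Finset.Icc 1 l).filter (fun n => h n ≠ 0)).card,
      idxF ((Finset.Icc 1 l).filter (fun n => h n ≠ 0)), idxF_mono _, ?_,
      classify l hl2 hleven h hsat⟩
    intro j hj
    rw [Finset.mem_Icc] at hj
    have := idxF_mem _ j hj.1 hj.2
    rw [Finset.mem_filter] at this
    exact this.1
  · have hsetEq : {h : ℕ → ℂ |
        (∀ i, i ∉ Finset.Icc 1 l → h i = 0) ∧ SatisfiesSystem l h}
        = (fun S : Finset ℕ => hfunC l S.card (idxF S)) '' ↑(Finset.Icc 1 l).powerset := by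
      ext h
      constructor
      · rintro ⟨hvan, hsat⟩
        refine ⟨(Finset.Icc 1 l).filter (fun n => h n ≠ 0), ?_, ?_⟩
        · simp only [Finset.coe_powerset, Set.mem_preimage, Set.mem_powerset_iff,
            Finset.coe_subset]
          exact Finset.filter_subset _ _
        · funext i
          by_cases hi : i ∈ Finset.Icc 1 l
          · exact (classify l hl2 hleven h hsat i hi).symm
          · show hfunC _ _ _ i = h i
            rw [hfunC_eq_zero, hvan i hi]
            intro j h1 h2 heq
            have := idxF_mem _ j h1 h2
            rw [Finset.mem_filter] at this
            exact hi (heq ▸ this.1)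
      · rintro ⟨S, hSA, rfl⟩
        have hS : S ⊆ Finset.Icc 1 l := by
          simpa only [Finset.coe_powerset, Set.mem_preimage, Set.mem_powerset_iff,
            Finset.coe_subset] using hSA
        refine ⟨?_, isSol l hl2 S hS⟩
        intro i hi
        apply hfunC_eq_zero
        intro j h1 h2 heq
        exact hi (heq ▸ hS (idxF_mem S j h1 h2))
    have hinj : Set.InjOn (fun S : Finset ℕ => hfunC l S.card (idxF S))
        ↑(Finset.Icc 1 l).powerset := by
      intro S hSA S' hSA' heq
      ext n
      rw [← support_Phi l hleven S n, ← support_Phi l hleven S' n]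
      simp only at heq
      rw [heq]
    rw [hsetEq, Set.ncard_image_of_injOn hinj, Set.ncard_coe_finset,
      Finset.card_powerset, Nat.card_Icc]
    simp
end

section
/- Let l be even and S = {i_1 < ⋯ < i_k} ⊆ {1,…,l}. The weight μ_S = Σ_{j=1}^{k} h_{i_j} ω_{i_j}, where h_{i_j} = Σ_{s=j+1}^{k} (−1)^{s−j} i_s + Σ_{s=1}^{j−1} (−1)^{j−s+1} i_s + (−1)^{k−j+1}(l+1)/2 and ω_1,…,ω_l are the fundamental weights of sl_{l+1}, is a dominant integral weight if and only if S = ∅ (equivalently, μ_S = 0). -/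
lemma Hval_not_int (l k : ℕ) (hleven : Even l) (idx : ℕ → ℕ) (j : ℕ) (n : ℕ) :
    Hval l k idx j ≠ (n : ℚ) := by
  intro h
  set A : ℤ := (∑ s ∈ Finset.Icc (j+1) k, (-1 : ℤ)^(s-j) * (idx s : ℤ))
    + ∑ s ∈ Finset.Icc 1 (j-1), (-1 : ℤ)^(j-s+1) * (idx s : ℤ) with hAdef
  have hA : ((A : ℚ)) = (∑ s ∈ Finset.Icc (j + 1) k, (-1 : ℚ) ^ (s - j) * (idx s : ℚ))
      + (∑ s ∈ Finset.Icc 1 (j - 1), (-1 : ℚ) ^ (j - s + 1) * (idx s : ℚ)) := by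
    push_cast [hAdef]; ring
  have h2 : ((A : ℚ)) + (-1 : ℚ) ^ (k - j + 1) * ((l : ℚ) + 1) / 2 = (n : ℚ) := by
    rw [hA]; exact h
  rcases Nat.even_or_odd (k - j + 1) with hp | hp
  · rw [hp.neg_one_pow] at h2
    have : ((l : ℚ) + 1) = 2 * ((n : ℤ) - A) := by push_cast; linarith
    have : (l : ℤ) + 1 = 2 * ((n : ℤ) - A) := by exact_mod_cast this
    obtain ⟨m, hm⟩ : ∃ m : ℤ, (l : ℤ) + 1 = 2 * m := ⟨_, this⟩
    obtain ⟨c, hc⟩ := hleven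
    have hc' : (l : ℤ) = c + c := by exact_mod_cast hc
    omega
  · rw [hp.neg_one_pow] at h2
    have : ((l : ℚ) + 1) = 2 * (A - (n : ℤ)) := by push_cast; linarith
    have : (l : ℤ) + 1 = 2 * (A - (n : ℤ)) := by exact_mod_cast this
    obtain ⟨m, hm⟩ : ∃ m : ℤ, (l : ℤ) + 1 = 2 * m := ⟨_, this⟩
    obtain ⟨c, hc⟩ := hleven
    have hc' : (l : ℤ) = c + c := by exact_mod_cast hc
    omega


/-- For `l` even and `S = {i_1 < ⋯ < i_k} ⊆ {1,…,l}`, the weight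
`μ_S = Σ_j h_{i_j} ω_{i_j}` is dominant integral (all coordinates in the
fundamental-weight basis are nonnegative integers) if and only if `S = ∅`
(equivalently, `μ_S = 0`). -/
theorem muS_dominant_integral_iff_empty (l k : ℕ) (hleven : Even l) (hl : 1 ≤ l)
    (idx : ℕ → ℕ) (hmono : StrictMonoOn idx (Set.Icc 1 k))
    (hrange : ∀ j ∈ Finset.Icc 1 k, idx j ∈ Finset.Icc 1 l) :
    ((∀ i ∈ Finset.Icc 1 l, ∃ n : ℕ, hfun l k idx i = (n : ℚ)) ↔ k = 0) ∧
    ((∀ i ∈ Finset.Icc 1 l, ∃ n : ℕ, hfun l k idx i = (n : ℚ)) ↔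
      ∀ i ∈ Finset.Icc 1 l, hfun l k idx i = 0) := by
  have hzero : k = 0 → ∀ i, hfun l k idx i = 0 := by
    intro hk i
    simp [hfun, hk]
  have main : (∀ i ∈ Finset.Icc 1 l, ∃ n : ℕ, hfun l k idx i = (n : ℚ)) → k = 0 := by
    intro hdom
    by_contra hk
    have hk1 : 1 ≤ k := Nat.one_le_iff_ne_zero.mpr hk
    have h1mem : (1 : ℕ) ∈ Finset.Icc 1 k := by simp [hk1]
    have hi1 : idx 1 ∈ Finset.Icc 1 l := hrange 1 h1mem
    obtain ⟨n, hn⟩ := hdom (idx 1) hi1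
    have heq : hfun l k idx (idx 1) = Hval l k idx 1 := by
      rw [hfun]
      rw [Finset.sum_eq_single 1]
      · simp
      · intro j hj hj1
        have : idx j ≠ idx 1 := by
          intro habs
          apply hj1
          have := hmono.injOn (by
            simp only [Finset.mem_Icc] at hj
            exact Set.mem_Icc.mpr hj) (Set.mem_Icc.mpr ⟨le_refl 1, hk1⟩) habs
          exact this
        simp [this]
      · intro habs; exact absurd h1mem habs
    rw [heq] at hn
    exact Hval_not_int l k hleven idx 1 n hn
  constructor
  · exact ⟨main, fun hk i _ => ⟨0, by simp [hzero hk i]⟩⟩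
  · constructor
    · intro hdom i _
      exact hzero (main hdom) i
    · intro h0 i hi
      exact ⟨0, by simpa using h0 i hi⟩
end

section
/- Let l ≥ 2 be even, S = {i_1 < ⋯ < i_k} ⊆ {1,…,l}, and μ_S = Σ_j h_{i_j} ω_{i_j} with h_{i_j} as in the alternating-sum formula. For any positive root ε_i − ε_j (i < j) of sl_{l+1}, let {i_s,…,i_t} = S ∩ {i, i+1, …, j−1}. Then (μ_S, ε_i − ε_j) = h_{i_s} + h_{i_{s+1}} + ⋯ + h_{i_t}; in particular, if t − s + 1 is even then (μ_S, ε_i − ε_j) = −(i_{s+1}−i_s) − (i_{s+3}−i_{s+2}) − ⋯ − (i_t − i_{t−1}) ≥ −(i_t − i_s). -/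
/-- Consecutive values telescope: `h_{i_j} + h_{i_{j+1}} = i_j − i_{j+1}`. -/
lemma Hpair (l k : ℕ) (idx : ℕ → ℕ) (j : ℕ) (hj1 : 1 ≤ j) (hjk : j + 1 ≤ k) :
    Hval l k idx j + Hval l k idx (j + 1) = (idx j : ℚ) - idx (j + 1) := by
  unfold Hval
  have hA : (∑ s ∈ Finset.Icc (j + 1) k, (-1 : ℚ) ^ (s - j) * (idx s : ℚ))
      + (∑ s ∈ Finset.Icc (j + 1 + 1) k, (-1 : ℚ) ^ (s - (j + 1)) * (idx s : ℚ))
      = -(idx (j + 1) : ℚ) := by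
    have hins : Finset.Icc (j + 1) k = insert (j + 1) (Finset.Icc (j + 2) k) := by
      ext x; simp only [Finset.mem_Icc, Finset.mem_insert]; omega
    rw [hins, Finset.sum_insert (by simp [Finset.mem_Icc])]
    have h1 : ((j : ℕ) + 1) - j = 1 := by omega
    rw [h1]
    have hcong : ∀ x ∈ Finset.Icc (j + 2) k,
        (-1 : ℚ) ^ (x - j) * (idx x : ℚ) = -((-1 : ℚ) ^ (x - (j + 1)) * (idx x : ℚ)) := by
      intro x hx
      simp only [Finset.mem_Icc] at hx
      have : x - j = (x - (j + 1)) + 1 := by omega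
      rw [this, pow_succ]; ring
    rw [Finset.sum_congr rfl hcong]
    have : (j + 1 + 1) = j + 2 := by omega
    rw [this, Finset.sum_neg_distrib]
    ring
  have hB : (∑ s ∈ Finset.Icc 1 (j - 1), (-1 : ℚ) ^ (j - s + 1) * (idx s : ℚ))
      + (∑ s ∈ Finset.Icc 1 (j + 1 - 1), (-1 : ℚ) ^ ((j + 1) - s + 1) * (idx s : ℚ))
      = (idx j : ℚ) := by
    have h11 : (j + 1 - 1) = j := by omega
    have hins : Finset.Icc 1 j = insert j (Finset.Icc 1 (j - 1)) := by
      ext x; simp only [Finset.mem_Icc, Finset.mem_insert]; omega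
    rw [h11, hins, Finset.sum_insert (by simp only [Finset.mem_Icc]; omega)]
    have h2 : (j + 1) - j + 1 = 2 := by omega
    rw [h2]
    have hcong : ∀ x ∈ Finset.Icc 1 (j - 1),
        (-1 : ℚ) ^ ((j + 1) - x + 1) * (idx x : ℚ)
          = -((-1 : ℚ) ^ (j - x + 1) * (idx x : ℚ)) := by
      intro x hx
      simp only [Finset.mem_Icc] at hx
      have : (j + 1) - x + 1 = (j - x + 1) + 1 := by omega
      rw [this, pow_succ]; ring
    rw [Finset.sum_congr rfl hcong, Finset.sum_neg_distrib]
    ring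
  have hC : (-1 : ℚ) ^ (k - j + 1) * ((l : ℚ) + 1) / 2
      + (-1 : ℚ) ^ (k - (j + 1) + 1) * ((l : ℚ) + 1) / 2 = 0 := by
    have : k - j + 1 = (k - (j + 1) + 1) + 1 := by omega
    rw [this, pow_succ]; ring
  linarith [hA, hB, hC]

/-- Splitting a sum of even length into consecutive pairs. -/
lemma sum_pairs (f : ℕ → ℚ) (s : ℕ) : ∀ N : ℕ,
    ∑ r ∈ Finset.range (2 * N), f (s + r)
      = ∑ r ∈ Finset.range N, (f (s + 2 * r) + f (s + 2 * r + 1)) := by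
  intro N
  induction N with
  | zero => simp
  | succ N ih =>
    have h2 : 2 * (N + 1) = 2 * N + 1 + 1 := by ring
    rw [h2, Finset.sum_range_succ, Finset.sum_range_succ, ih, Finset.sum_range_succ]
    have e1 : s + (2 * N + 1) = s + 2 * N + 1 := by omega
    rw [e1]
    ring

/-- The sum of the odd-position gaps is at most the full gap. -/
lemma gap_le (k : ℕ) (idx : ℕ → ℕ) (hmono : StrictMonoOn idx (Set.Icc 1 k))
    (s : ℕ) (hs : 1 ≤ s) : ∀ N : ℕ, 1 ≤ N → s + 2 * N - 1 ≤ k →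
    ∑ r ∈ Finset.range N, ((idx (s + 2 * r + 1) : ℚ) - idx (s + 2 * r))
      ≤ (idx (s + 2 * N - 1) : ℚ) - idx s := by
  intro N
  induction N with
  | zero => intro h; exact absurd h (by omega)
  | succ N ih =>
    intro _ hk
    rcases Nat.eq_zero_or_pos N with h0 | hpos
    · subst h0
      rw [Finset.sum_range_succ, Finset.sum_range_zero]
      have e : s + 2 * (0 + 1) - 1 = s + 2 * 0 + 1 := by omega
      rw [e]
      norm_num
    · have hk' : s + 2 * N - 1 ≤ k := by omega
      have h1 := ih hpos hk'
      rw [Finset.sum_range_succ]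
      have hm : idx (s + 2 * N - 1) ≤ idx (s + 2 * N) := by
        apply hmono.monotoneOn ⟨by omega, by omega⟩ ⟨by omega, by omega⟩ (by omega)
      have hm' : (idx (s + 2 * N - 1) : ℚ) ≤ idx (s + 2 * N) := by exact_mod_cast hm
      have he : s + 2 * (N + 1) - 1 = s + 2 * N + 1 := by omega
      rw [he]
      linarith

/-- For `l ≥ 2` even, `S = {i_1 < ⋯ < i_k} ⊆ {1,…,l}` and a positive root
`ε_i − ε_j` (`i < j`), with `S ∩ {i,…,j−1} = {i_s,…,i_t}`, one has
`(μ_S, ε_i − ε_j) = h_{i_s} + ⋯ + h_{i_t}`; in particular, if `t − s + 1` is even then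
`(μ_S, ε_i − ε_j) = −(i_{s+1}−i_s) − (i_{s+3}−i_{s+2}) − ⋯ − (i_t − i_{t−1}) ≥ −(i_t − i_s)`. -/
theorem pairing_muS_positive_root (l k : ℕ) (hl2 : 2 ≤ l) (hleven : Even l)
    (idx : ℕ → ℕ) (hmono : StrictMonoOn idx (Set.Icc 1 k))
    (hrange : ∀ j' ∈ Finset.Icc 1 k, idx j' ∈ Finset.Icc 1 l)
    (i j : ℕ) (hi : 1 ≤ i) (hij : i < j) (hj : j ≤ l + 1)
    (s t : ℕ) (hs : 1 ≤ s) (hst : s ≤ t) (ht : t ≤ k)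
    (hcap : ∀ j' ∈ Finset.Icc 1 k, (idx j' ∈ Finset.Icc i (j - 1) ↔ j' ∈ Finset.Icc s t)) :
    (∑ m ∈ Finset.Icc i (j - 1), hfun l k idx m) = (∑ j' ∈ Finset.Icc s t, Hval l k idx j') ∧
    (Even (t - s + 1) →
      (∑ m ∈ Finset.Icc i (j - 1), hfun l k idx m) =
        -(∑ r ∈ Finset.range ((t - s + 1) / 2),
            ((idx (s + 2 * r + 1) : ℚ) - (idx (s + 2 * r) : ℚ))) ∧
      (∑ m ∈ Finset.Icc i (j - 1), hfun l k idx m) ≥ -((idx t : ℚ) - (idx s : ℚ))) := by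
  have part1 : (∑ m ∈ Finset.Icc i (j - 1), hfun l k idx m)
      = ∑ j' ∈ Finset.Icc s t, Hval l k idx j' := by
    unfold hfun
    rw [Finset.sum_comm]
    have hcong : ∀ j' ∈ Finset.Icc 1 k,
        (∑ m ∈ Finset.Icc i (j - 1), if idx j' = m then Hval l k idx j' else 0)
          = if j' ∈ Finset.Icc s t then Hval l k idx j' else 0 := by
      intro j' hj'
      rw [Finset.sum_ite_eq (Finset.Icc i (j - 1)) (idx j') (fun _ => Hval l k idx j')]
      exact if_congr (hcap j' hj') rfl rfl
    rw [Finset.sum_congr rfl hcong, Finset.sum_ite_mem,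
      Finset.inter_eq_right.mpr (Finset.Icc_subset_Icc hs ht)]
  refine ⟨part1, fun heven => ?_⟩
  obtain ⟨u, hu⟩ := heven
  set n := (t - s + 1) / 2 with hn
  have h2n : 2 * n = t + 1 - s := by omega
  have hn1 : 1 ≤ n := by omega
  have key : (∑ j' ∈ Finset.Icc s t, Hval l k idx j')
      = -(∑ r ∈ Finset.range n, ((idx (s + 2 * r + 1) : ℚ) - idx (s + 2 * r))) := by
    rw [← Finset.Ico_add_one_right_eq_Icc, Finset.sum_Ico_eq_sum_range, ← h2n, sum_pairs, ← Finset.sum_neg_distrib]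
    apply Finset.sum_congr rfl
    intro r hr
    have hr' : r < n := Finset.mem_range.mp hr
    have hpair := Hpair l k idx (s + 2 * r) (by omega) (by omega)
    rw [hpair]
    ring
  have hineq := gap_le k idx hmono s hs n hn1 (by omega)
  have het : s + 2 * n - 1 = t := by omega
  rw [het] at hineq
  constructor
  · rw [part1, key]
  · rw [part1, key]
    have : -((idx t : ℚ) - idx s)
        ≤ -(∑ r ∈ Finset.range n, ((idx (s + 2 * r + 1) : ℚ) - idx (s + 2 * r))) := by
      exact neg_le_neg hineq
    exact this
end

section
/- Let l be even, S = {i_1 < ⋯ < i_k} ⊆ {1,…,l}, λ_S = −((l+1)/2)Λ_0 + μ_S the corresponding weight of the affine Lie algebra of type A_l^{(1)}, and ρ the affine Weyl vector. For every positive real root α̃ = α + mδ (with m > 0 and α a root of sl_{l+1}, or m = 0 and α a positive root), one has ⟨λ_S + ρ, α̃^∨⟩ ∉ −ℤ_{≥0}. Equivalently, in concrete terms: m(l+1)/2 + (ρ̄, α) + (μ_S, α) is never a nonpositive integer, where ρ̄ is the sum of the fundamental weights of sl_{l+1}. -/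
/- ### Auxiliary integer-valued alternating sums -/

def QaZ (idx : ℕ → ℕ) : ℕ → ℤ
  | 0 => 0
  | m+1 => (idx (m+1) : ℤ) - QaZ idx m

def PaZ (k : ℕ) (idx : ℕ → ℕ) (m : ℕ) : ℤ :=
  if _h : m ≤ k then (idx m : ℤ) - PaZ k idx (m+1) else 0
termination_by k + 1 - m
decreasing_by omega

lemma QaZ_succ (idx : ℕ → ℕ) (m : ℕ) : QaZ idx (m+1) = (idx (m+1) : ℤ) - QaZ idx m := rfl

lemma PaZ_eq_of_le (k : ℕ) (idx : ℕ → ℕ) {m : ℕ} (h : m ≤ k) :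
    PaZ k idx m = (idx m : ℤ) - PaZ k idx (m+1) := by
  rw [PaZ, dif_pos h]

lemma PaZ_eq_of_gt (k : ℕ) (idx : ℕ → ℕ) {m : ℕ} (h : k < m) : PaZ k idx m = 0 := by
  rw [PaZ, dif_neg (by omega)]

lemma QaZ_sum (idx : ℕ → ℕ) (m : ℕ) :
    ((QaZ idx m : ℤ) : ℚ) = ∑ s ∈ Finset.Icc 1 m, (-1:ℚ)^(m+s) * (idx s : ℚ) := by
  induction m with
  | zero => simp [QaZ]
  | succ m ih =>
    rw [Finset.sum_Icc_succ_top (by omega : 1 ≤ m+1)]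
    have h1 : ∀ s ∈ Finset.Icc 1 m, (-1:ℚ)^(m+1+s) * (idx s : ℚ)
        = -((-1:ℚ)^(m+s) * (idx s : ℚ)) := by
      intro s hs
      rw [show m+1+s = (m+s)+1 by ring, pow_succ]; ring
    rw [Finset.sum_congr rfl h1, Finset.sum_neg_distrib, QaZ_succ]
    push_cast
    rw [ih, show m+1+(m+1) = 2*(m+1) by ring, pow_mul, neg_one_sq, one_pow]
    ring

lemma PaZ_sum (k : ℕ) (idx : ℕ → ℕ) (m : ℕ) :
    ((PaZ k idx m : ℤ) : ℚ) = ∑ s ∈ Finset.Icc m k, (-1:ℚ)^(s+m) * (idx s : ℚ) := by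
  by_cases h : m ≤ k
  · rw [PaZ_eq_of_le k idx h]
    have ih := PaZ_sum k idx (m+1)
    have hins : Finset.Icc m k = insert m (Finset.Icc (m+1) k) := by
      ext x; simp only [Finset.mem_Icc, Finset.mem_insert]; omega
    have hnm : m ∉ Finset.Icc (m+1) k := by simp
    rw [hins, Finset.sum_insert hnm]
    have h1 : ∀ s ∈ Finset.Icc (m+1) k, (-1:ℚ)^(s+m) * (idx s : ℚ)
        = -((-1:ℚ)^(s+(m+1)) * (idx s : ℚ)) := by
      intro s hs
      rw [show s+(m+1) = (s+m)+1 by ring, pow_succ]; ring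
    rw [Finset.sum_congr rfl h1, Finset.sum_neg_distrib, ← ih]
    push_cast
    rw [show m+m = 2*m by ring, pow_mul, neg_one_sq, one_pow]
    ring
  · rw [PaZ_eq_of_gt k idx (by omega), Finset.Icc_eq_empty (by omega)]; simp
termination_by k + 1 - m
decreasing_by omega

lemma Hval_eq (l k : ℕ) (idx : ℕ → ℕ) (t : ℕ) (h1 : 1 ≤ t) (h2 : t ≤ k) :
    Hval l k idx t = ((QaZ idx (t-1) : ℤ) : ℚ) - ((PaZ k idx (t+1) : ℤ) : ℚ)
      + (-1:ℚ)^(k+t+1) * ((l:ℚ)+1) / 2 := by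
  unfold Hval
  have e1 : (∑ s ∈ Finset.Icc (t+1) k, (-1:ℚ)^(s-t) * (idx s : ℚ))
      = -∑ s ∈ Finset.Icc (t+1) k, (-1:ℚ)^(s+(t+1)) * (idx s : ℚ) := by
    rw [← Finset.sum_neg_distrib]
    apply Finset.sum_congr rfl
    intro s hs
    simp only [Finset.mem_Icc] at hs
    rw [show s+(t+1) = (s-t)+(2*t+1) by omega, pow_add,
      show (-1:ℚ)^(2*t+1) = -1 by rw [pow_succ, pow_mul, neg_one_sq, one_pow, one_mul]]
    ring
  have e2 : (∑ s ∈ Finset.Icc 1 (t-1), (-1:ℚ)^(t-s+1) * (idx s : ℚ))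
      = ∑ s ∈ Finset.Icc 1 (t-1), (-1:ℚ)^((t-1)+s) * (idx s : ℚ) := by
    apply Finset.sum_congr rfl
    intro s hs
    simp only [Finset.mem_Icc] at hs
    conv_rhs => rw [show (t-1)+s = (t-s+1)+2*(s-1) by omega, pow_add, pow_mul, neg_one_sq,
      one_pow, mul_one]
  have e3 : (-1:ℚ)^(k-t+1) = (-1:ℚ)^(k+t+1) := by
    conv_rhs => rw [show k+t+1 = (k-t+1)+2*t by omega, pow_add, pow_mul, neg_one_sq,
      one_pow, mul_one]
  rw [e1, e2, e3, QaZ_sum, PaZ_sum]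
  ring

lemma D_formula (l k : ℕ) (idx : ℕ → ℕ) (b : ℕ) (hb : b ≤ k) :
    (∑ t ∈ Finset.Icc 1 b, Hval l k idx t) =
      if Even b then -((QaZ idx b : ℤ) : ℚ)
      else -((PaZ k idx (b+1) : ℤ) : ℚ) + (-1:ℚ)^(k+b+1) * ((l:ℚ)+1) / 2 := by
  induction b with
  | zero =>
    rw [Finset.Icc_eq_empty (by omega)]
    simp [QaZ]
  | succ b ih =>
    rw [Finset.sum_Icc_succ_top (by omega : 1 ≤ b+1), ih (by omega),
      Hval_eq l k idx (b+1) (by omega) hb]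
    simp only [Nat.add_sub_cancel]
    by_cases hEb : Even b
    · rw [if_pos hEb, if_neg (by simp [Nat.even_add_one, hEb])]
      ring
    · rw [if_neg hEb, if_pos (Nat.even_add_one.mpr hEb)]
      have hp : PaZ k idx (b+1) = (idx (b+1) : ℤ) - PaZ k idx (b+1+1) := PaZ_eq_of_le k idx hb
      have hq : QaZ idx (b+1) = (idx (b+1) : ℤ) - QaZ idx b := rfl
      have hpow : (-1:ℚ)^(k+(b+1)+1) = -(-1:ℚ)^(k+b+1) := by
        rw [show k+(b+1)+1 = (k+b+1)+1 by ring, pow_succ]; ring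
      rw [hpow, hp, hq]
      push_cast
      ring

/- ### Final integer arithmetic lemmas -/

lemma keyZodd (w : ℕ) (c G : ℤ) (n : ℕ)
    (heq : c * (2*(w:ℤ)+1) + 2*G = -2*(n:ℤ)) (hodd : Odd c) : False := by
  obtain ⟨u, rfl⟩ := hodd
  obtain ⟨M, hM⟩ : ∃ M, u * (w:ℤ) = M := ⟨_, rfl⟩
  have hexp : (2*u+1) * (2*(w:ℤ)+1) = 4*M + 2*u + 2*(w:ℤ) + 1 := by rw [← hM]; ring
  rw [hexp] at heq
  omega

lemma keyZ (w : ℕ) (c G : ℤ) (n : ℕ)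
    (heq : c * (2*(w:ℤ)+1) + 2*G = -2*(n:ℤ)) (hev : Even c)
    (hpos : 2 ≤ c ∨ (0 ≤ c ∧ 1 ≤ G)) (hG : -2*(w:ℤ) ≤ G) : False := by
  obtain ⟨u, rfl⟩ : ∃ u, c = 2*u := by obtain ⟨v, hv⟩ := hev; exact ⟨v, by omega⟩
  obtain ⟨M, hM⟩ : ∃ M, u * (w:ℤ) = M := ⟨_, rfl⟩
  have hexp : (2*u) * (2*(w:ℤ)+1) = 4*M + 2*u := by rw [← hM]; ring
  rw [hexp] at heq
  rcases hpos with h | ⟨h0, h1⟩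
  · have hu1 : (1:ℤ) ≤ u := by omega
    have hMw : (w:ℤ) ≤ M := by rw [← hM]; exact le_mul_of_one_le_left (Int.natCast_nonneg w) hu1
    omega
  · have hM0 : (0:ℤ) ≤ M := by rw [← hM]; exact mul_nonneg (by omega) (Int.natCast_nonneg w)
    omega

lemma final1 (w m n : ℕ) (G e : ℤ) (he : e = 0 ∨ e = 1 ∨ e = -1)
    (hb1 : e = 1 → -2*(w:ℤ) ≤ G ∧ G ≤ -1) (hb2 : e ≠ 1 → 1 ≤ G ∧ G ≤ 2*(w:ℤ))
    (heq : ((m:ℤ) + e) * (2*(w:ℤ)+1) + 2*G = -2*(n:ℤ)) : False := by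
  rcases he with rfl | rfl | rfl
  · have hb := hb2 (by norm_num)
    rcases Nat.even_or_odd m with ⟨u, hu⟩ | ⟨u, hu⟩
    · exact keyZ w _ G n heq ⟨(u:ℤ), by omega⟩ (Or.inr ⟨by omega, hb.1⟩) (by omega)
    · exact keyZodd w _ G n heq ⟨(u:ℤ), by omega⟩
  · rcases Nat.even_or_odd m with ⟨u, hu⟩ | ⟨u, hu⟩
    · exact keyZodd w _ G n heq ⟨(u:ℤ), by omega⟩
    · have hb := hb1 rfl
      exact keyZ w _ G n heq ⟨(u:ℤ)+1, by omega⟩ (Or.inl (by omega)) hb.1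
  · have hb := hb2 (by norm_num)
    rcases Nat.even_or_odd m with ⟨u, hu⟩ | ⟨u, hu⟩
    · exact keyZodd w _ G n heq ⟨(u:ℤ)-1, by omega⟩
    · exact keyZ w _ G n heq ⟨(u:ℤ), by omega⟩ (Or.inr ⟨by omega, hb.1⟩) (by omega)

lemma final2 (w m n : ℕ) (hm : 1 ≤ m) (G e : ℤ) (he : e = 0 ∨ e = 1 ∨ e = -1)
    (hb1 : e = 1 → -2*(w:ℤ) ≤ G ∧ G ≤ -1) (hb2 : e ≠ 1 → 1 ≤ G ∧ G ≤ 2*(w:ℤ))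
    (heq : ((m:ℤ) - e) * (2*(w:ℤ)+1) - 2*G = -2*(n:ℤ)) : False := by
  have heq' : ((m:ℤ) - e) * (2*(w:ℤ)+1) + 2*(-G) = -2*(n:ℤ) := by linarith
  rcases he with rfl | rfl | rfl
  · have hb := hb2 (by norm_num)
    rcases Nat.even_or_odd m with ⟨u, hu⟩ | ⟨u, hu⟩
    · exact keyZ w _ (-G) n heq' ⟨(u:ℤ), by omega⟩ (Or.inl (by omega)) (by omega)
    · exact keyZodd w _ (-G) n heq' ⟨(u:ℤ), by omega⟩
  · rcases Nat.even_or_odd m with ⟨u, hu⟩ | ⟨u, hu⟩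
    · exact keyZodd w _ (-G) n heq' ⟨(u:ℤ)-1, by omega⟩
    · have hb := hb1 rfl
      exact keyZ w _ (-G) n heq' ⟨(u:ℤ), by omega⟩ (Or.inr ⟨by omega, by omega⟩) (by omega)
  · have hb := hb2 (by norm_num)
    rcases Nat.even_or_odd m with ⟨u, hu⟩ | ⟨u, hu⟩
    · exact keyZodd w _ (-G) n heq' ⟨(u:ℤ), by omega⟩
    · exact keyZ w _ (-G) n heq' ⟨(u:ℤ)+1, by omega⟩ (Or.inl (by omega)) (by omega)

/-- For `l` even, `S = {i_1 < ⋯ < i_k} ⊆ {1,…,l}` and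
`λ_S = −((l+1)/2)Λ_0 + μ_S`, for every positive real root `α̃ = α + mδ` (with `m > 0`
and `α = ±(ε_i − ε_j)` a root of `sl_{l+1}`, or `m = 0` and `α = ε_i − ε_j` positive),
`⟨λ_S + ρ, α̃^∨⟩ = m(l+1)/2 + (ρ̄, α) + (μ_S, α)` is never a nonpositive integer. -/
theorem lambdaS_rho_pairing_not_nonpositive_integer (l k : ℕ) (hleven : Even l) (hl : 1 ≤ l)
    (idx : ℕ → ℕ) (hmono : StrictMonoOn idx (Set.Icc 1 k))
    (hrange : ∀ j ∈ Finset.Icc 1 k, idx j ∈ Finset.Icc 1 l) :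
    (∀ m i j : ℕ, 1 ≤ i → i < j → j ≤ l + 1 →
      ¬∃ n : ℕ, (m : ℚ) * ((l : ℚ) + 1) / 2 + ((j : ℚ) - (i : ℚ))
          + (∑ p ∈ Finset.Icc i (j - 1), hfun l k idx p) = -(n : ℚ)) ∧
    (∀ m i j : ℕ, 1 ≤ m → 1 ≤ i → i < j → j ≤ l + 1 →
      ¬∃ n : ℕ, (m : ℚ) * ((l : ℚ) + 1) / 2 - ((j : ℚ) - (i : ℚ))
          - (∑ p ∈ Finset.Icc i (j - 1), hfun l k idx p) = -(n : ℚ)) := by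
  obtain ⟨w, hw⟩ := hleven
  -- basic range and monotonicity facts
  have hrange' : ∀ t, 1 ≤ t → t ≤ k → 1 ≤ idx t ∧ idx t ≤ l := by
    intro t h1 h2
    have := hrange t (Finset.mem_Icc.mpr ⟨h1, h2⟩)
    simpa [Finset.mem_Icc] using this
  have hmono'' : ∀ t, 1 ≤ t → t + 1 ≤ k → idx t < idx (t+1) := by
    intro t h1 h2
    exact hmono (Set.mem_Icc.mpr ⟨h1, by omega⟩) (Set.mem_Icc.mpr ⟨by omega, h2⟩) (by omega)
  have hmono' : ∀ s t, 1 ≤ s → s ≤ t → t ≤ k → idx s ≤ idx t := by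
    intro s t h1 h2 h3
    rcases eq_or_lt_of_le h2 with rfl | h
    · exact le_refl _
    · exact le_of_lt (hmono (Set.mem_Icc.mpr ⟨h1, by omega⟩)
        (Set.mem_Icc.mpr ⟨by omega, h3⟩) h)
  -- bounds for QaZ
  have Qb : ∀ m, m ≤ k → 0 ≤ QaZ idx m ∧ (1 ≤ m → QaZ idx m ≤ (idx m : ℤ)) := by
    intro m
    induction m with
    | zero =>
      intro _
      have h0 : QaZ idx 0 = 0 := rfl
      exact ⟨by omega, by omega⟩
    | succ m ih =>
      intro hm
      have hrec : QaZ idx (m+1) = (idx (m+1) : ℤ) - QaZ idx m := rfl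
      rcases Nat.eq_zero_or_pos m with rfl | h1
      · have h0 : QaZ idx 0 = 0 := rfl
        have h := (hrange' 1 (le_refl 1) hm).1
        exact ⟨by omega, fun _ => by omega⟩
      · obtain ⟨ih1, ih2⟩ := ih (by omega)
        have h2 := ih2 h1
        have hlt := hmono'' m h1 hm
        exact ⟨by omega, fun _ => by omega⟩
  -- bounds for PaZ (by parity of the distance to k)
  have Pb : ∀ d m, 1 ≤ m → m + d = k →
      ((d % 2 = 0 → (idx m : ℤ) ≤ PaZ k idx m ∧ PaZ k idx m ≤ (idx k : ℤ)) ∧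
       (d % 2 = 1 → (idx m : ℤ) - (idx k : ℤ) ≤ PaZ k idx m ∧ PaZ k idx m ≤ 0)) := by
    intro d
    induction d with
    | zero =>
      intro m h1 h2
      have hm : m = k := by omega
      have h0 : PaZ k idx (m+1) = 0 := PaZ_eq_of_gt k idx (by omega)
      have hr : PaZ k idx m = (idx m : ℤ) - PaZ k idx (m+1) := PaZ_eq_of_le k idx (by omega)
      have hik : idx m = idx k := by rw [hm]
      exact ⟨fun _ => ⟨by omega, by omega⟩, fun hcon => by omega⟩
    | succ d ih =>
      intro m h1 h2
      have hrec : PaZ k idx m = (idx m : ℤ) - PaZ k idx (m+1) := PaZ_eq_of_le k idx (by omega)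
      have ihm := ih (m+1) (by omega) (by omega)
      have hlt : idx m < idx (m+1) := hmono'' m h1 (by omega)
      have hmk : idx (m+1) ≤ idx k := hmono' (m+1) k (by omega) (by omega) (le_refl k)
      constructor
      · intro hpar
        have := ihm.2 (by omega)
        omega
      · intro hpar
        have := ihm.1 (by omega)
        omega
  -- bounds for differences of QaZ at indices of equal parity
  have Qdiff : ∀ d a b, 1 ≤ d → a + 2*d = b → b ≤ k →
      QaZ idx a ≤ QaZ idx b ∧ QaZ idx b ≤ QaZ idx a + (idx b : ℤ) - (idx (a+1) : ℤ) := by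
    intro d
    induction d with
    | zero => intro a b h1 h2 h3; omega
    | succ d ih =>
      intro a b h1 h2 h3
      have e2 : QaZ idx (a+1) = (idx (a+1) : ℤ) - QaZ idx a := QaZ_succ idx a
      have e1 : QaZ idx (a+2) = (idx (a+2) : ℤ) - QaZ idx (a+1) := by
        have := QaZ_succ idx (a+1)
        rw [show a+1+1 = a+2 by omega] at this
        exact this
      have hlt : idx (a+1) < idx (a+2) := by
        have := hmono'' (a+1) (by omega) (by omega)
        rw [show a+1+1 = a+2 by omega] at this
        exact this
      rcases Nat.eq_zero_or_pos d with rfl | hd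
      · obtain rfl : b = a + 2 := by omega
        constructor <;> omega
      · have ihd := ih (a+2) b hd (by omega) h3
        have hle2 : idx (a+2) < idx (a+2+1) := hmono'' (a+2) (by omega) (by omega)
        constructor <;> omega
  -- the bridge identity between PaZ differences and QaZ differences
  have Cp : ∀ d m b, m + 2*d = b → b ≤ k →
      PaZ k idx (m+1) - PaZ k idx (b+1) = QaZ idx m - QaZ idx b := by
    intro d
    induction d with
    | zero =>
      intro m b h1 h2
      obtain rfl : b = m := by omega
      ring
    | succ d ih =>
      intro m b h1 h2
      have e1 : PaZ k idx (m+1) = (idx (m+1) : ℤ) - PaZ k idx (m+1+1) :=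
        PaZ_eq_of_le k idx (by omega)
      rw [show m+1+1 = m+2 by omega] at e1
      have e2 : PaZ k idx (m+2) = (idx (m+2) : ℤ) - PaZ k idx (m+2+1) :=
        PaZ_eq_of_le k idx (by omega)
      have e3 := ih (m+2) b (by omega) h2
      have e4 : QaZ idx (m+1) = (idx (m+1) : ℤ) - QaZ idx m := QaZ_succ idx m
      have e5 : QaZ idx (m+2) = (idx (m+2) : ℤ) - QaZ idx (m+1) := by
        have := QaZ_succ idx (m+1)
        rw [show m+1+1 = m+2 by omega] at this
        exact this
      linarith
  -- counting function facts
  have cnt_le : ∀ c : ℕ, ((Finset.Icc 1 k).filter (fun s => idx s ≤ c)).card ≤ k := by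
    intro c
    have h := Finset.card_filter_le (Finset.Icc 1 k) (fun s => idx s ≤ c)
    rw [Nat.card_Icc] at h
    omega
  have cnt_iff : ∀ c t, 1 ≤ t → t ≤ k →
      (idx t ≤ c ↔ t ≤ ((Finset.Icc 1 k).filter (fun s => idx s ≤ c)).card) := by
    intro c t h1 h2
    constructor
    · intro h
      have hsub : Finset.Icc 1 t ⊆ (Finset.Icc 1 k).filter (fun s => idx s ≤ c) := by
        intro s hs
        simp only [Finset.mem_Icc] at hs
        simp only [Finset.mem_filter, Finset.mem_Icc]
        exact ⟨⟨hs.1, le_trans hs.2 h2⟩, le_trans (hmono' s t hs.1 hs.2 h2) h⟩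
      have hcard := Finset.card_le_card hsub
      rw [Nat.card_Icc] at hcard
      omega
    · intro h
      by_contra hc
      push_neg at hc
      have hsub : (Finset.Icc 1 k).filter (fun s => idx s ≤ c) ⊆ Finset.Icc 1 (t-1) := by
        intro s hs
        simp only [Finset.mem_filter, Finset.mem_Icc] at hs
        simp only [Finset.mem_Icc]
        refine ⟨hs.1.1, ?_⟩
        by_contra hst
        push_neg at hst
        have hts : t ≤ s := by omega
        have := hmono' t s h1 hts hs.1.2
        omega
      have hcard := Finset.card_le_card hsub
      rw [Nat.card_Icc] at hcard
      omega
  have cnt_mono : ∀ c c' : ℕ, c ≤ c' →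
      ((Finset.Icc 1 k).filter (fun s => idx s ≤ c)).card ≤
      ((Finset.Icc 1 k).filter (fun s => idx s ≤ c')).card := by
    intro c c' hcc
    apply Finset.card_le_card
    intro x hx
    simp only [Finset.mem_filter] at hx ⊢
    exact ⟨hx.1, le_trans hx.2 hcc⟩
  have hikl : 1 ≤ k → idx k ≤ l := fun h => (hrange' k h (le_refl k)).2
  -- the key structural decomposition
  have key : ∀ i j : ℕ, 1 ≤ i → i < j → j ≤ l + 1 →
      ∃ G e : ℤ, (e = 0 ∨ e = 1 ∨ e = -1) ∧
        (e = 1 → -2*(w:ℤ) ≤ G ∧ G ≤ -1) ∧ (e ≠ 1 → 1 ≤ G ∧ G ≤ 2*(w:ℤ)) ∧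
        ((j:ℚ) - (i:ℚ) + (∑ p ∈ Finset.Icc i (j-1), hfun l k idx p)
          = (G:ℚ) + (e:ℚ) * (((l:ℚ)+1)/2)) := by
    intro i j hi hij hjl
    obtain ⟨α, hαdef⟩ : ∃ a, ((Finset.Icc 1 k).filter (fun t => idx t ≤ i-1)).card = a := ⟨_, rfl⟩
    obtain ⟨β, hβdef⟩ : ∃ b, ((Finset.Icc 1 k).filter (fun t => idx t ≤ j-1)).card = b := ⟨_, rfl⟩
    have hβk : β ≤ k := by rw [← hβdef]; exact cnt_le (j-1)
    have hαβ : α ≤ β := by rw [← hαdef, ← hβdef]; exact cnt_mono _ _ (by omega)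
    have hiffα : ∀ t, 1 ≤ t → t ≤ k → (idx t ≤ i-1 ↔ t ≤ α) := by
      intro t h1 h2; rw [← hαdef]; exact cnt_iff (i-1) t h1 h2
    have hiffβ : ∀ t, 1 ≤ t → t ≤ k → (idx t ≤ j-1 ↔ t ≤ β) := by
      intro t h1 h2; rw [← hβdef]; exact cnt_iff (j-1) t h1 h2
    have hQA : 0 ≤ QaZ idx α ∧ QaZ idx α ≤ (i:ℤ) - 1 := by
      rcases Nat.eq_zero_or_pos α with rfl | hα1
      · have h0 : QaZ idx 0 = 0 := rfl
        exact ⟨by omega, by omega⟩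
      · have h1 := (Qb α (by omega)).1
        have h2 := (Qb α (by omega)).2 hα1
        have h3 : idx α ≤ i - 1 := (hiffα α hα1 (by omega)).mpr (le_refl α)
        exact ⟨h1, by omega⟩
    have hβj : 1 ≤ β → idx β ≤ j - 1 := fun h => (hiffβ β h hβk).mpr (le_refl β)
    have hαi : α < k → i ≤ idx (α+1) := by
      intro h
      have hiff := hiffα (α+1) (by omega) (by omega)
      have h2 : ¬ idx (α+1) ≤ i - 1 := fun hc => by have := hiff.mp hc; omega
      omega
    have hβ1 : β < k → j ≤ idx (β+1) := by
      intro h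
      have hiff := hiffβ (β+1) (by omega) (by omega)
      have h2 : ¬ idx (β+1) ≤ j - 1 := fun hc => by have := hiff.mp hc; omega
      omega
    -- rewrite the hfun-sum as a difference of Hval prefix sums
    have hswap : (∑ p ∈ Finset.Icc i (j-1), hfun l k idx p)
        = ∑ t ∈ Finset.Icc (α+1) β, Hval l k idx t := by
      have hfil : (Finset.Icc 1 k).filter (fun t => idx t ∈ Finset.Icc i (j-1))
          = Finset.Icc (α+1) β := by
        ext t
        simp only [Finset.mem_filter, Finset.mem_Icc]
        constructor
        · rintro ⟨⟨ht1, htk⟩, hti, htj⟩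
          have h2 := (hiffβ t ht1 htk).mp htj
          have h3 : ¬ (t ≤ α) := fun hc => by
            have := (hiffα t ht1 htk).mpr hc; omega
          omega
        · rintro ⟨hta, htb⟩
          have ht1 : 1 ≤ t := by omega
          have htk : t ≤ k := by omega
          have h4 : ¬ idx t ≤ i - 1 := fun hc => by
            have := (hiffα t ht1 htk).mp hc; omega
          have h5 := (hiffβ t ht1 htk).mpr htb
          have h6 := (hrange' t ht1 htk).1
          exact ⟨⟨ht1, htk⟩, by omega, h5⟩
      calc (∑ p ∈ Finset.Icc i (j-1), hfun l k idx p)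
          = ∑ p ∈ Finset.Icc i (j-1), ∑ t ∈ Finset.Icc 1 k,
              (if idx t = p then Hval l k idx t else 0) := by simp only [hfun]
        _ = ∑ t ∈ Finset.Icc 1 k, ∑ p ∈ Finset.Icc i (j-1),
              (if idx t = p then Hval l k idx t else 0) := Finset.sum_comm
        _ = ∑ t ∈ Finset.Icc 1 k,
              (if idx t ∈ Finset.Icc i (j-1) then Hval l k idx t else 0) := by
            apply Finset.sum_congr rfl
            intro t _
            exact Finset.sum_ite_eq (Finset.Icc i (j-1)) (idx t) (fun _ => Hval l k idx t)
        _ = ∑ t ∈ (Finset.Icc 1 k).filter (fun t => idx t ∈ Finset.Icc i (j-1)),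
              Hval l k idx t := (Finset.sum_filter _ _).symm
        _ = ∑ t ∈ Finset.Icc (α+1) β, Hval l k idx t := by rw [hfil]
    have hsplit : (∑ t ∈ Finset.Icc 1 α, Hval l k idx t)
        + (∑ t ∈ Finset.Icc (α+1) β, Hval l k idx t)
        = ∑ t ∈ Finset.Icc 1 β, Hval l k idx t := by
      rw [show Finset.Icc 1 α = Finset.Ioc 0 α from by
            ext x; simp only [Finset.mem_Icc, Finset.mem_Ioc]; omega,
          show Finset.Icc (α+1) β = Finset.Ioc α β from by
            ext x; simp only [Finset.mem_Icc, Finset.mem_Ioc]; omega,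
          show Finset.Icc 1 β = Finset.Ioc 0 β from by
            ext x; simp only [Finset.mem_Icc, Finset.mem_Ioc]; omega]
      exact Finset.sum_Ioc_consecutive _ (Nat.zero_le α) hαβ
    have hsum : (∑ p ∈ Finset.Icc i (j-1), hfun l k idx p)
        = (∑ t ∈ Finset.Icc 1 β, Hval l k idx t)
          - (∑ t ∈ Finset.Icc 1 α, Hval l k idx t) := by
      rw [hswap]; linarith [hsplit]
    have hDα := D_formula l k idx α (le_trans hαβ hβk)
    have hDβ := D_formula l k idx β hβk
    rcases Nat.even_or_odd α with ⟨a2, ha2⟩ | ⟨a2, ha2⟩ <;>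
      rcases Nat.even_or_odd β with ⟨b2, hb2⟩ | ⟨b2, hb2⟩
    · -- α even, β even
      rw [if_pos ⟨a2, ha2⟩] at hDα
      rw [if_pos ⟨b2, hb2⟩] at hDβ
      refine ⟨(j:ℤ) - (i:ℤ) + QaZ idx α - QaZ idx β, 0, Or.inl rfl,
        fun h => absurd h (by norm_num), fun _ => ?_, ?_⟩
      · rcases eq_or_lt_of_le hαβ with rfl | hlt
        · omega
        · have hd : α + 2*(b2 - a2) = β := by omega
          have hq := Qdiff (b2 - a2) α β (by omega) hd hβk
          have h3 := hβj (by omega)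
          have h4 := hαi (by omega)
          omega
      · rw [hsum, hDα, hDβ]
        push_cast
        ring
    · -- α even, β odd
      rw [if_pos ⟨a2, ha2⟩] at hDα
      rw [if_neg (by rintro ⟨y, hy⟩; omega : ¬ Even β)] at hDβ
      rcases Nat.even_or_odd (k+β) with ⟨z, hz⟩ | ⟨z, hz⟩
      · -- k+β even : e = -1
        have hpow : (-1:ℚ)^(k+β+1) = -1 := by
          rw [show k+β+1 = 2*z+1 by omega, pow_succ, pow_mul, neg_one_sq, one_pow, one_mul]
        refine ⟨(j:ℤ) - (i:ℤ) + QaZ idx α - PaZ k idx (β+1), -1, Or.inr (Or.inr rfl),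
          fun h => absurd h (by norm_num), fun _ => ?_, ?_⟩
        · rcases eq_or_lt_of_le hβk with heqβ | hβk'
          · have h0 : PaZ k idx (β+1) = 0 := PaZ_eq_of_gt k idx (by omega)
            omega
          · have hPb := (Pb (k-β-1) (β+1) (by omega) (by omega)).2 (by omega)
            have h5 := hβ1 hβk'
            have h6 := hikl (by omega)
            omega
        · rw [hsum, hDα, hDβ, hpow]
          push_cast
          ring
      · -- k+β odd : e = 1
        have hpow : (-1:ℚ)^(k+β+1) = 1 := by
          rw [show k+β+1 = 2*(z+1) by omega, pow_mul, neg_one_sq, one_pow]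
        refine ⟨(j:ℤ) - (i:ℤ) + QaZ idx α - PaZ k idx (β+1), 1, Or.inr (Or.inl rfl),
          fun _ => ?_, fun h => absurd rfl h, ?_⟩
        · have hβk' : β < k := by omega
          have hPb := (Pb (k-β-1) (β+1) (by omega) (by omega)).1 (by omega)
          have h5 := hβ1 hβk'
          have h6 := hikl (by omega)
          omega
        · rw [hsum, hDα, hDβ, hpow]
          push_cast
          ring
    · -- α odd, β even
      rw [if_neg (by rintro ⟨y, hy⟩; omega : ¬ Even α)] at hDα
      rw [if_pos ⟨b2, hb2⟩] at hDβ
      have hαβ' : α < β := by omega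
      have e1 : PaZ k idx (α+1) = (idx (α+1) : ℤ) - PaZ k idx (α+1+1) :=
        PaZ_eq_of_le k idx (by omega)
      rw [show α+1+1 = α+2 by omega] at e1
      have hd : (α+1) + 2*((β-α-1)/2) = β := by omega
      have e2 := Cp ((β-α-1)/2) (α+1) β hd hβk
      rw [show α+1+1 = α+2 by omega] at e2
      have e4 : QaZ idx (α+1) = (idx (α+1) : ℤ) - QaZ idx α := QaZ_succ idx α
      have hPid : PaZ k idx (α+1) = QaZ idx α + QaZ idx β - PaZ k idx (β+1) := by linarith
      have hPidQ : ((PaZ k idx (α+1) : ℤ) : ℚ)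
          = ((QaZ idx α : ℤ) : ℚ) + ((QaZ idx β : ℤ) : ℚ) - ((PaZ k idx (β+1) : ℤ) : ℚ) := by
        exact_mod_cast congrArg (fun z : ℤ => (z : ℚ)) hPid
      rcases Nat.even_or_odd (k+α) with ⟨z, hz⟩ | ⟨z, hz⟩
      · -- k+α even : e = 1
        have hpow : (-1:ℚ)^(k+α+1) = -1 := by
          rw [show k+α+1 = 2*z+1 by omega, pow_succ, pow_mul, neg_one_sq, one_pow, one_mul]
        refine ⟨(j:ℤ) - (i:ℤ) + QaZ idx α - PaZ k idx (β+1), 1, Or.inr (Or.inl rfl),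
          fun _ => ?_, fun h => absurd rfl h, ?_⟩
        · have hβk' : β < k := by omega
          have hPb := (Pb (k-β-1) (β+1) (by omega) (by omega)).1 (by omega)
          have h5 := hβ1 hβk'
          have h6 := hikl (by omega)
          omega
        · rw [hsum, hDα, hDβ, hpow]
          push_cast [hPidQ]
          ring
      · -- k+α odd : e = -1
        have hpow : (-1:ℚ)^(k+α+1) = 1 := by
          rw [show k+α+1 = 2*(z+1) by omega, pow_mul, neg_one_sq, one_pow]
        refine ⟨(j:ℤ) - (i:ℤ) + QaZ idx α - PaZ k idx (β+1), -1, Or.inr (Or.inr rfl),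
          fun h => absurd h (by norm_num), fun _ => ?_, ?_⟩
        · rcases eq_or_lt_of_le hβk with heqβ | hβk'
          · have h0 : PaZ k idx (β+1) = 0 := PaZ_eq_of_gt k idx (by omega)
            omega
          · have hPb := (Pb (k-β-1) (β+1) (by omega) (by omega)).2 (by omega)
            have h5 := hβ1 hβk'
            have h6 := hikl (by omega)
            omega
        · rw [hsum, hDα, hDβ, hpow]
          push_cast [hPidQ]
          ring
    · -- α odd, β odd
      rw [if_neg (by rintro ⟨y, hy⟩; omega : ¬ Even α)] at hDα
      rw [if_neg (by rintro ⟨y, hy⟩; omega : ¬ Even β)] at hDβ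
      have hpow : (-1:ℚ)^(k+β+1) = (-1:ℚ)^(k+α+1) := by
        conv_lhs => rw [show k+β+1 = (k+α+1)+2*(b2-a2) by omega, pow_add, pow_mul,
          neg_one_sq, one_pow, mul_one]
      have hd : α + 2*(b2-a2) = β := by omega
      have e2 := Cp (b2-a2) α β hd hβk
      have e2Q : ((PaZ k idx (α+1) : ℤ) : ℚ) - ((PaZ k idx (β+1) : ℤ) : ℚ)
          = ((QaZ idx α : ℤ) : ℚ) - ((QaZ idx β : ℤ) : ℚ) := by
        exact_mod_cast congrArg (fun z : ℤ => (z : ℚ)) e2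
      refine ⟨(j:ℤ) - (i:ℤ) + QaZ idx α - QaZ idx β, 0, Or.inl rfl,
        fun h => absurd h (by norm_num), fun _ => ?_, ?_⟩
      · rcases eq_or_lt_of_le hαβ with rfl | hlt
        · omega
        · have hq := Qdiff (b2 - a2) α β (by omega) hd hβk
          have h3 := hβj (by omega)
          have h4 := hαi (by omega)
          omega
      · rw [hsum, hDβ, hDα, hpow]
        push_cast
        linarith [e2Q]
  -- finish
  have hlq : (l:ℚ) = 2*(w:ℚ) := by rw [hw]; push_cast; ring
  constructor
  · intro m i j hi hij hjl
    rintro ⟨n, heq⟩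
    obtain ⟨G, e, he, hb1, hb2, hF⟩ := key i j hi hij hjl
    have hq : ((m:ℚ) + (e:ℚ)) * (2*(w:ℚ)+1) + 2*(G:ℚ) = -2*(n:ℚ) := by
      linear_combination 2*heq - 2*hF - ((m:ℚ)+(e:ℚ))*hlq
    exact final1 w m n G e he hb1 hb2 (by exact_mod_cast hq)
  · intro m i j hm hi hij hjl
    rintro ⟨n, heq⟩
    obtain ⟨G, e, he, hb1, hb2, hF⟩ := key i j hi hij hjl
    have hq : ((m:ℚ) - (e:ℚ)) * (2*(w:ℚ)+1) - 2*(G:ℚ) = -2*(n:ℚ) := by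
      linear_combination 2*heq + 2*hF - ((m:ℚ)-(e:ℚ))*hlq
    exact final2 w m n hm G e he hb1 hb2 (by exact_mod_cast hq)
end

section
/- Let l be even and λ = −((l+1)/2)Λ_0. The weight λ is admissible for the affine Lie algebra of type A_l^{(1)}: ⟨λ + ρ, α^∨⟩ ∉ −ℤ_{≥0} for every positive real coroot α^∨, and the rational span of the coroots α^∨ with ⟨λ, α^∨⟩ ∈ ℤ equals the rational span of the simple coroots. Moreover the set of simple coroots for λ is Π^∨_λ = {(2δ − θ)^∨, α_1^∨, …, α_l^∨}. -/
/- We model coroots of the affine Lie algebra of type `A_l^{(1)}` as pairs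
`(v, m) : (ℕ → ℚ) × ℚ`, where `v` is the finite part written in the (1-based)
`ε`-coordinates, and `m` is the coefficient of the canonical central element `c`
(the coroot of the real root `α + mδ` is `α^∨ + mc`). -/

/-- The finite coroot `(ε_i − ε_j)^∨` in `ε`-coordinates. -/
noncomputable def cor (i j : ℕ) : ℕ → ℚ :=
  fun n => (if n = i then 1 else 0) - (if n = j then 1 else 0)

/-- The set of coroots of real roots `±(ε_i − ε_j) + mδ`, `m ∈ ℤ`. -/
noncomputable def realCoroots (l : ℕ) : Set ((ℕ → ℚ) × ℚ) :=
  {x | ∃ i j : ℕ, ∃ m : ℤ, 1 ≤ i ∧ i < j ∧ j ≤ l + 1 ∧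
    (x = (cor i j, (m : ℚ)) ∨ x = (-(cor i j), (m : ℚ)))}

/-- The set of coroots of positive real roots: `α + mδ` with `m ≥ 1` and `α` any root,
or `m = 0` and `α` positive. -/
noncomputable def posRealCoroots (l : ℕ) : Set ((ℕ → ℚ) × ℚ) :=
  {x | ∃ i j : ℕ, ∃ m : ℤ, 1 ≤ i ∧ i < j ∧ j ≤ l + 1 ∧
    ((x = (cor i j, (m : ℚ)) ∧ 0 ≤ m) ∨ (x = (-(cor i j), (m : ℚ)) ∧ 1 ≤ m))}

/-- The pairing `⟨λ, α^∨ + mc⟩` for `λ = −((l+1)/2)Λ_0` of level `k = −(l+1)/2`: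
`λ` vanishes on finite coroots and `⟨λ, c⟩ = −(l+1)/2`. -/
noncomputable def pairLam (l : ℕ) (x : (ℕ → ℚ) × ℚ) : ℚ :=
  x.2 * (-(((l : ℚ) + 1) / 2))

/-- The pairing `⟨λ + ρ, α^∨ + mc⟩`: on the finite coroot `(ε_i−ε_j)^∨` it gives
`⟨ρ̄, (ε_i−ε_j)^∨⟩ = j − i`, and `⟨λ + ρ, c⟩ = k + h^∨ = (l+1)/2`. -/
noncomputable def pairLamRho (l : ℕ) (x : (ℕ → ℚ) × ℚ) : ℚ :=
  (-(∑ n ∈ Finset.range (l + 2), (n : ℚ) * x.1 n)) + x.2 * (((l : ℚ) + 1) / 2)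

/-- The set `Δ^∨_λ` of real coroots pairing integrally with `λ`. -/
noncomputable def DeltaLam (l : ℕ) : Set ((ℕ → ℚ) × ℚ) :=
  {x ∈ realCoroots l | ∃ z : ℤ, pairLam l x = (z : ℚ)}

/-- The set `Δ^∨_{λ+}` of positive real coroots pairing integrally with `λ`. -/
noncomputable def DeltaLamPos (l : ℕ) : Set ((ℕ → ℚ) × ℚ) :=
  posRealCoroots l ∩ DeltaLam l

/-- `Π^∨_λ`: elements of `Δ^∨_{λ+}` which are not sums of several coroots
from `Δ^∨_{λ+}`. -/
noncomputable def PiLam (l : ℕ) : Set ((ℕ → ℚ) × ℚ) :=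
  {x ∈ DeltaLamPos l | ¬∃ (n : ℕ) (f : Fin n → (ℕ → ℚ) × ℚ), 2 ≤ n ∧
    (∀ t, f t ∈ DeltaLamPos l) ∧ x = ∑ t, f t}

/-- The simple affine coroots `α_1^∨, …, α_l^∨` and `α_0^∨ = c − θ^∨`. -/
noncomputable def simpleCoroots (l : ℕ) : Set ((ℕ → ℚ) × ℚ) :=
  {x | (∃ i, 1 ≤ i ∧ i ≤ l ∧ x = (cor i (i + 1), (0 : ℚ))) ∨ x = (-(cor 1 (l + 1)), (1 : ℚ))}

lemma pairext {a b : ℕ → ℚ} {c d : ℚ} (h1 : ∀ n, a n = b n) (h2 : c = d) :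
    ((a, c) : (ℕ → ℚ) × ℚ) = (b, d) := by rw [funext h1, h2]

lemma sum_eps (l i : ℕ) (hi : i < l + 2) :
    ∑ n ∈ Finset.range (l + 2), (n : ℚ) * (if n = i then (1:ℚ) else 0) = i := by
  rw [Finset.sum_eq_single i (fun b _ hb => by simp [hb])
    (fun h => absurd (Finset.mem_range.2 hi) h)]
  simp

lemma pr_cor (l i j : ℕ) (m : ℚ) (hi : i < l + 2) (hj : j < l + 2) :
    pairLamRho l (cor i j, m) = (j : ℚ) - i + m * ((l : ℚ) + 1) / 2 := by
  simp only [pairLamRho, cor, mul_sub, Finset.sum_sub_distrib, sum_eps l i hi, sum_eps l j hj]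
  ring

lemma pr_ncor (l i j : ℕ) (m : ℚ) (hi : i < l + 2) (hj : j < l + 2) :
    pairLamRho l (-(cor i j), m) = (i : ℚ) - j + m * ((l : ℚ) + 1) / 2 := by
  simp only [pairLamRho, cor, Pi.neg_apply, neg_sub, mul_sub, Finset.sum_sub_distrib,
    sum_eps l i hi, sum_eps l j hj]
  ring

noncomputable def Lmap (l : ℕ) : ((ℕ → ℚ) × ℚ) →ₗ[ℚ] ℚ where
  toFun := pairLamRho l
  map_add' x y := by
    simp only [pairLamRho, Prod.fst_add, Prod.snd_add, Pi.add_apply, mul_add,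
      Finset.sum_add_distrib]
    ring
  map_smul' c x := by
    simp only [pairLamRho, Prod.smul_fst, Prod.smul_snd, Pi.smul_apply, smul_eq_mul,
      RingHom.id_apply]
    have h : ∑ n ∈ Finset.range (l + 2), (n : ℚ) * (c * x.1 n)
        = c * ∑ n ∈ Finset.range (l + 2), (n : ℚ) * x.1 n := by
      rw [Finset.mul_sum]; exact Finset.sum_congr rfl (fun n _ => by ring)
    rw [h]; ring
lemma pr_sum (l : ℕ) {n : ℕ} (f : Fin n → (ℕ → ℚ) × ℚ) :
    pairLamRho l (∑ t, f t) = ∑ t, pairLamRho l (f t) := by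
  exact map_sum (Lmap l) f Finset.univ

lemma even_of_mul (l : ℕ) (hleven : Even l) {m : ℤ} (h : Even (m * ((l : ℤ) + 1))) :
    Even m := by
  rcases Int.even_mul.mp h with h1 | h1
  · exact h1
  · exfalso
    have : Even (l : ℤ) := Int.even_coe_nat l |>.mpr hleven
    exact (Int.even_add_one.mp h1) this

lemma exz_of_even (l : ℕ) {m : ℤ} (hm : Even m) (v : ℕ → ℚ) :
    ∃ z : ℤ, pairLam l (v, (m : ℚ)) = (z : ℚ) := by
  obtain ⟨t, rfl⟩ := hm
  refine ⟨-(t * ((l : ℤ) + 1)), ?_⟩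
  simp only [pairLam]
  push_cast
  ring

lemma exz_iff (l : ℕ) (hleven : Even l) (m : ℤ) (v : ℕ → ℚ) :
    (∃ z : ℤ, pairLam l (v, (m : ℚ)) = (z : ℚ)) ↔ Even m := by
  constructor
  · rintro ⟨z, hz⟩
    have h1 : (m : ℚ) * (-(((l : ℚ) + 1) / 2)) = z := hz
    have h2 : ((m * ((l : ℤ) + 1) : ℤ) : ℚ) = ((-2 * z : ℤ) : ℚ) := by push_cast; linarith
    have h3 : m * ((l : ℤ) + 1) = -2 * z := by exact_mod_cast h2
    exact even_of_mul l hleven ⟨-z, by omega⟩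
  · intro hm
    exact exz_of_even l hm v

lemma mem_pos_cor (l i j : ℕ) (hi : 1 ≤ i) (hij : i < j) (hj : j ≤ l + 1) (m : ℤ)
    (hm : 0 ≤ m) (hme : Even m) : (cor i j, (m : ℚ)) ∈ DeltaLamPos l := by
  refine ⟨⟨i, j, m, hi, hij, hj, Or.inl ⟨rfl, hm⟩⟩,
    ⟨i, j, m, hi, hij, hj, Or.inl rfl⟩, exz_of_even l hme _⟩

lemma mem_pos_ncor (l i j : ℕ) (hi : 1 ≤ i) (hij : i < j) (hj : j ≤ l + 1) (m : ℤ)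
    (hm : 1 ≤ m) (hme : Even m) : (-(cor i j), (m : ℚ)) ∈ DeltaLamPos l := by
  refine ⟨⟨i, j, m, hi, hij, hj, Or.inr ⟨rfl, hm⟩⟩,
    ⟨i, j, m, hi, hij, hj, Or.inr rfl⟩, exz_of_even l hme _⟩

lemma one_le_pr (l : ℕ) (hleven : Even l) {x : (ℕ → ℚ) × ℚ} (hx : x ∈ DeltaLamPos l) :
    1 ≤ pairLamRho l x := by
  obtain ⟨⟨i, j, m, hi, hij, hj, hc⟩, _, hz⟩ := hx
  have hiq : (1 : ℚ) ≤ (i : ℚ) := by exact_mod_cast hi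
  have hijq : (i : ℚ) + 1 ≤ (j : ℚ) := by exact_mod_cast hij
  have hjq : (j : ℚ) ≤ (l : ℚ) + 1 := by exact_mod_cast hj
  have hl0 : (0 : ℚ) ≤ (l : ℚ) := Nat.cast_nonneg l
  rcases hc with ⟨rfl, hm⟩ | ⟨rfl, hm⟩
  · rw [pr_cor l i j _ (by omega) (by omega)]
    have hmq : (0 : ℚ) ≤ (m : ℚ) := by exact_mod_cast hm
    nlinarith
  · have hme : Even m := (exz_iff l hleven m _).mp hz
    have hm2 : 2 ≤ m := by obtain ⟨t, rfl⟩ := hme; omega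
    have hmq : (2 : ℚ) ≤ (m : ℚ) := by exact_mod_cast hm2
    rw [pr_ncor l i j _ (by omega) (by omega)]
    nlinarith
lemma part1 (l : ℕ) (hleven : Even l) :
    ∀ x ∈ posRealCoroots l, ¬∃ n : ℕ, pairLamRho l x = -(n : ℚ) := by
  rintro x ⟨i, j, m, hi, hij, hj, hc⟩ ⟨n, hn⟩
  have hiq : (1 : ℚ) ≤ (i : ℚ) := by exact_mod_cast hi
  have hijq : (i : ℚ) + 1 ≤ (j : ℚ) := by exact_mod_cast hij
  have hjq : (j : ℚ) ≤ (l : ℚ) + 1 := by exact_mod_cast hj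
  have hl0 : (0 : ℚ) ≤ (l : ℚ) := Nat.cast_nonneg l
  have hn0 : (0 : ℚ) ≤ (n : ℚ) := Nat.cast_nonneg n
  rcases hc with ⟨rfl, hm⟩ | ⟨rfl, hm⟩
  · rw [pr_cor l i j _ (by omega) (by omega)] at hn
    have hmq : (0 : ℚ) ≤ (m : ℚ) := by exact_mod_cast hm
    nlinarith
  · rw [pr_ncor l i j _ (by omega) (by omega)] at hn
    have h2 : ((m * ((l : ℤ) + 1) : ℤ) : ℚ) = ((2 * ((j : ℤ) - i - n) : ℤ) : ℚ) := by
      push_cast; linarith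
    have h3 : m * ((l : ℤ) + 1) = 2 * ((j : ℤ) - i - n) := by exact_mod_cast h2
    have hme : Even m := even_of_mul l hleven ⟨(j : ℤ) - i - n, by omega⟩
    have hm2 : 2 ≤ m := by obtain ⟨t, rfl⟩ := hme; omega
    have hmq : (2 : ℚ) ≤ (m : ℚ) := by exact_mod_cast hm2
    nlinarith

lemma cor_span (l i : ℕ) (hi : 1 ≤ i) : ∀ j, i < j → j ≤ l + 1 →
    ((cor i j, (0 : ℚ)) : (ℕ → ℚ) × ℚ) ∈ Submodule.span ℚ (simpleCoroots l) := by
  intro j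
  induction j with
  | zero => omega
  | succ j ih =>
    intro hij hj
    rcases Nat.lt_or_ge i j with h | h
    · have hcs : cor i (j + 1) = cor i j + cor j (j + 1) :=
        funext fun n => by simp only [cor, Pi.add_apply]; ring
      have e : ((cor i (j + 1), (0 : ℚ)) : (ℕ → ℚ) × ℚ)
          = (cor i j, (0 : ℚ)) + (cor j (j + 1), (0 : ℚ)) := by
        rw [Prod.mk_add_mk, hcs]; norm_num
      rw [e]
      exact add_mem (ih h (by omega))
        (Submodule.subset_span (Or.inl ⟨j, by omega, by omega, rfl⟩))
    · have : j = i := by omega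
      subst this
      exact Submodule.subset_span (Or.inl ⟨j, hi, by omega, rfl⟩)

lemma c_mem_span (l : ℕ) (hl : 1 ≤ l) :
    (((0 : ℕ → ℚ), (1 : ℚ)) : (ℕ → ℚ) × ℚ) ∈ Submodule.span ℚ (simpleCoroots l) := by
  have h1 : ((-(cor 1 (l + 1)), (1 : ℚ)) : (ℕ → ℚ) × ℚ) ∈ Submodule.span ℚ (simpleCoroots l) :=
    Submodule.subset_span (Or.inr rfl)
  have h2 := cor_span l 1 le_rfl (l + 1) (by omega) le_rfl
  have e : (((0 : ℕ → ℚ), (1 : ℚ)) : (ℕ → ℚ) × ℚ)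
      = (-(cor 1 (l + 1)), (1 : ℚ)) + (cor 1 (l + 1), (0 : ℚ)) := by
    rw [Prod.mk_add_mk, neg_add_cancel]; norm_num
  rw [e]; exact add_mem h1 h2

lemma part2 (l : ℕ) (hleven : Even l) (hl : 1 ≤ l) :
    Submodule.span ℚ (DeltaLam l) = Submodule.span ℚ (simpleCoroots l) := by
  apply le_antisymm
  · rw [Submodule.span_le]
    rintro x ⟨⟨i, j, m, hi, hij, hj, hc⟩, hz⟩
    have hc0 := cor_span l i hi j hij hj
    have hcc := c_mem_span l hl
    rcases hc with rfl | rfl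
    · have e : ((cor i j, (m : ℚ)) : (ℕ → ℚ) × ℚ)
          = (cor i j, (0 : ℚ)) + (m : ℚ) • (((0 : ℕ → ℚ), (1 : ℚ)) : (ℕ → ℚ) × ℚ) := by
        rw [Prod.smul_mk, Prod.mk_add_mk, smul_zero]; norm_num
      rw [e]
      exact add_mem hc0 (Submodule.smul_mem _ _ hcc)
    · have e : ((-(cor i j), (m : ℚ)) : (ℕ → ℚ) × ℚ)
          = -((cor i j, (0 : ℚ)) : (ℕ → ℚ) × ℚ)
            + (m : ℚ) • (((0 : ℕ → ℚ), (1 : ℚ)) : (ℕ → ℚ) × ℚ) := by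
        rw [Prod.smul_mk, Prod.neg_mk, Prod.mk_add_mk, smul_zero]; norm_num
      rw [e]
      exact add_mem (neg_mem hc0) (Submodule.smul_mem _ _ hcc)
  · rw [Submodule.span_le]
    rintro x (⟨i, hi1, hil, rfl⟩ | rfl)
    · exact Submodule.subset_span
        ⟨⟨i, i + 1, 0, hi1, by omega, by omega, Or.inl (by norm_num)⟩,
          ⟨0, by simp [pairLam]⟩⟩
    · have hA : ((-(cor 1 (l + 1)), (2 : ℚ)) : (ℕ → ℚ) × ℚ) ∈ DeltaLam l :=
        ⟨⟨1, l + 1, 2, le_rfl, by omega, le_rfl, Or.inr (by norm_num)⟩,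
          ⟨-(l : ℤ) - 1, by simp only [pairLam]; push_cast; ring⟩⟩
      have hB : ((-(cor 1 (l + 1)), (0 : ℚ)) : (ℕ → ℚ) × ℚ) ∈ DeltaLam l :=
        ⟨⟨1, l + 1, 0, le_rfl, by omega, le_rfl, Or.inr (by norm_num)⟩,
          ⟨0, by simp [pairLam]⟩⟩
      have e : ((-(cor 1 (l + 1)), (1 : ℚ)) : (ℕ → ℚ) × ℚ)
          = (1 / 2 : ℚ) • ((-(cor 1 (l + 1)), (2 : ℚ)) : (ℕ → ℚ) × ℚ)
            + (1 / 2 : ℚ) • ((-(cor 1 (l + 1)), (0 : ℚ)) : (ℕ → ℚ) × ℚ) := by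
        rw [Prod.smul_mk, Prod.smul_mk, Prod.mk_add_mk, ← add_smul]
        norm_num
      rw [e]
      exact add_mem (Submodule.smul_mem _ _ (Submodule.subset_span hA))
        (Submodule.smul_mem _ _ (Submodule.subset_span hB))
lemma sum2 {a b : (ℕ → ℚ) × ℚ} : (∑ t, ![a, b] t) = a + b := by
  simp [Fin.sum_univ_two]

lemma sum3 {a b c : (ℕ → ℚ) × ℚ} : (∑ t, ![a, b, c] t) = a + b + c := by
  simp [Fin.sum_univ_three]

lemma part3 (l : ℕ) (hleven : Even l) (hl : 1 ≤ l) :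
    PiLam l = {x | x = (-(cor 1 (l + 1)), (2 : ℚ)) ∨
      ∃ i, 1 ≤ i ∧ i ≤ l ∧ x = (cor i (i + 1), (0 : ℚ))} := by
  ext x
  constructor
  · rintro ⟨⟨⟨i, j, m, hi, hij, hj, hc⟩, hD⟩, hind⟩
    by_contra hR
    simp only [Set.mem_setOf_eq] at hR
    push_neg at hR
    obtain ⟨hR1, hR2⟩ := hR
    apply hind
    rcases hc with ⟨rfl, hm⟩ | ⟨rfl, hm⟩
    · have hme : Even m := (exz_iff l hleven m _).mp hD.2
      rcases eq_or_lt_of_le hm with hm0 | hm2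
      · -- m = 0
        have hm0' : m = 0 := hm0.symm
        subst hm0'
        rcases Nat.lt_or_ge (i + 1) j with hj2 | hj2
        · -- j ≥ i + 2 : split into two
          refine ⟨2, ![(cor i (i + 1), (0 : ℚ)), (cor (i + 1) j, (0 : ℚ))], le_rfl, ?_, ?_⟩
          · intro t
            fin_cases t
            · simpa using mem_pos_cor l i (i + 1) hi (by omega) (by omega) 0 le_rfl Even.zero
            · simpa using mem_pos_cor l (i + 1) j (by omega) hj2 hj 0 le_rfl Even.zero
          · rw [sum2, Prod.mk_add_mk]
            exact pairext (fun n => by simp only [cor, Pi.add_apply]; ring) (by norm_num)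
        · -- j = i + 1 : x is in RHS, contradiction
          have : j = i + 1 := by omega
          subst this
          exact absurd (by norm_num) (hR2 i hi (by omega))
      · -- m ≥ 2 (m > 0, even)
        have hm2' : 2 ≤ m := by obtain ⟨t, rfl⟩ := hme; omega
        refine ⟨3, ![(cor i j, ((m - 2 : ℤ) : ℚ)), (-(cor 1 2), (2 : ℚ)),
          (cor 1 2, (0 : ℚ))], by omega, ?_, ?_⟩
        · intro t
          fin_cases t
          · simpa using mem_pos_cor l i j hi hij hj (m - 2) (by omega)
              (by obtain ⟨t, rfl⟩ := hme; exact ⟨t - 1, by omega⟩)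
          · simpa using mem_pos_ncor l 1 2 le_rfl (by omega) (by omega) 2 (by omega) ⟨1, rfl⟩
          · simpa using mem_pos_cor l 1 2 le_rfl (by omega) (by omega) 0 le_rfl Even.zero
        · rw [sum3, Prod.mk_add_mk, Prod.mk_add_mk]
          exact pairext (fun n => by simp only [cor, Pi.add_apply, Pi.neg_apply]; ring)
            (by push_cast; ring)
    · have hme : Even m := (exz_iff l hleven m _).mp hD.2
      have hm2 : 2 ≤ m := by obtain ⟨t, rfl⟩ := hme; omega
      rcases eq_or_lt_of_le hm2 with hm2' | hm4
      · -- m = 2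
        have hm2'' : m = 2 := hm2'.symm
        subst hm2''
        rcases Nat.lt_or_ge 1 i with hi2 | hi1
        · -- i ≥ 2
          refine ⟨2, ![(-(cor 1 j), (2 : ℚ)), (cor 1 i, (0 : ℚ))], le_rfl, ?_, ?_⟩
          · intro t
            fin_cases t
            · simpa using mem_pos_ncor l 1 j le_rfl (by omega) hj 2 (by omega) ⟨1, rfl⟩
            · simpa using mem_pos_cor l 1 i le_rfl hi2 (by omega) 0 le_rfl Even.zero
          · rw [sum2, Prod.mk_add_mk]
            exact pairext (fun n => by simp only [cor, Pi.add_apply, Pi.neg_apply]; ring)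
              (by norm_num)
        · -- i = 1
          have hi1' : i = 1 := by omega
          subst hi1'
          rcases Nat.lt_or_ge j (l + 1) with hjl | hjl
          · -- j < l + 1
            refine ⟨2, ![(-(cor 1 (l + 1)), (2 : ℚ)), (cor j (l + 1), (0 : ℚ))], le_rfl, ?_, ?_⟩
            · intro t
              fin_cases t
              · simpa using mem_pos_ncor l 1 (l + 1) le_rfl (by omega) le_rfl 2
                  (by omega) ⟨1, rfl⟩
              · simpa using mem_pos_cor l j (l + 1) (by omega) hjl le_rfl 0 le_rfl Even.zero
            · rw [sum2, Prod.mk_add_mk]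
              exact pairext (fun n => by simp only [cor, Pi.add_apply, Pi.neg_apply]; ring)
                (by norm_num)
          · -- j = l + 1 : x in RHS, contradiction
            have : j = l + 1 := by omega
            subst this
            exact absurd (by norm_num) hR1
      · -- m ≥ 3, even
        refine ⟨3, ![(-(cor i j), ((m - 2 : ℤ) : ℚ)), (-(cor 1 2), (2 : ℚ)),
          (cor 1 2, (0 : ℚ))], by omega, ?_, ?_⟩
        · intro t
          fin_cases t
          · simpa using mem_pos_ncor l i j hi hij hj (m - 2) (by omega)
              (by obtain ⟨t, rfl⟩ := hme; exact ⟨t - 1, by omega⟩)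
          · simpa using mem_pos_ncor l 1 2 le_rfl (by omega) (by omega) 2 (by omega) ⟨1, rfl⟩
          · simpa using mem_pos_cor l 1 2 le_rfl (by omega) (by omega) 0 le_rfl Even.zero
        · rw [sum3, Prod.mk_add_mk, Prod.mk_add_mk]
          exact pairext (fun n => by simp only [cor, Pi.add_apply, Pi.neg_apply]; ring)
            (by push_cast; ring)
  · intro hx
    have hmem : x ∈ DeltaLamPos l := by
      rcases hx with rfl | ⟨i, hi1, hil, rfl⟩
      · simpa using mem_pos_ncor l 1 (l + 1) le_rfl (by omega) le_rfl 2 (by omega) ⟨1, rfl⟩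
      · simpa using mem_pos_cor l i (i + 1) hi1 (by omega) (by omega) 0 le_rfl Even.zero
    have hpr : pairLamRho l x = 1 := by
      rcases hx with rfl | ⟨i, hi1, hil, rfl⟩
      · rw [pr_ncor l 1 (l + 1) 2 (by omega) (by omega)]
        push_cast; ring
      · rw [pr_cor l i (i + 1) 0 (by omega) (by omega)]
        push_cast; ring
    refine ⟨hmem, ?_⟩
    rintro ⟨n, f, hn, hf, hsum⟩
    have h1 : pairLamRho l x = ∑ t, pairLamRho l (f t) := by rw [hsum, pr_sum]
    have h2 : (n : ℚ) ≤ ∑ t, pairLamRho l (f t) := by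
      calc (n : ℚ) = ∑ _t : Fin n, (1 : ℚ) := by simp
      _ ≤ _ := Finset.sum_le_sum fun t _ => one_le_pr l hleven (hf t)
    have h3 : (2 : ℚ) ≤ (n : ℚ) := by exact_mod_cast hn
    rw [hpr] at h1
    linarith


/-- For `l` even, the weight `λ = −((l+1)/2)Λ_0` is admissible:
`⟨λ+ρ, α^∨⟩ ∉ −ℤ_{≥0}` for every positive real coroot, the rational span of the real
coroots pairing integrally with `λ` is the rational span of the simple coroots, and
`Π^∨_λ = {(2δ−θ)^∨, α_1^∨, …, α_l^∨}` where `(2δ−θ)^∨ = 2c − θ^∨`. -/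
theorem lambda_admissible (l : ℕ) (hleven : Even l) (hl : 1 ≤ l) :
    (∀ x ∈ posRealCoroots l, ¬∃ n : ℕ, pairLamRho l x = -(n : ℚ)) ∧
    (Submodule.span ℚ (DeltaLam l) = Submodule.span ℚ (simpleCoroots l)) ∧
    (PiLam l = {x | x = (-(cor 1 (l + 1)), (2 : ℚ)) ∨
      ∃ i, 1 ≤ i ∧ i ≤ l ∧ x = (cor i (i + 1), (0 : ℚ))}) := by
  exact ⟨part1 l hleven, part2 l hleven hl, part3 l hleven hl⟩
end
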